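/- arXiv:1711.06961 — 9 statements merged into one kernel-verified Lean document; each statement's English description precedes it below -/
import Mathlib

section
/- If M is an additive submonoid of the nonnegative rationals such that 0 is not a limit point of M, then M is a BF-monoid, i.e., M is atomic and every element of M has only finitely many factorization lengths. -/
open scoped BigOperators

/-- A Puiseux monoid: an additive submonoid of ℚ consisting of nonnegative elements. -/
def IsPuiseux (M : AddSubmonoid ℚ) : Prop := ∀ x ∈ M, (0:ℚ) ≤ x

/-- `a` is an atom of the submonoid `S`. -/
def IsAtomOf {α : Type*} [AddCommMonoid α] (S : AddSubmonoid α) (a : α) : Prop :=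
  a ∈ S ∧ a ≠ 0 ∧ ∀ u v : α, u ∈ S → v ∈ S → a = u + v → u = 0 ∨ v = 0

/-- `x` has a factorization of length `n` into atoms of `S`. -/
def IsLengthOf {α : Type*} [AddCommMonoid α] (S : AddSubmonoid α) (x : α) (n : ℕ) : Prop :=
  ∃ f : Fin n → α, (∀ i, IsAtomOf S (f i)) ∧ x = ∑ i, f i

/-- The set of lengths of `x` in `S`. -/
def lengthsOf {α : Type*} [AddCommMonoid α] (S : AddSubmonoid α) (x : α) : Set ℕ :=
  {n | IsLengthOf S x n}

/-- `S` is atomic: every nonzero element is a finite sum of atoms. -/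
def AtomicM {α : Type*} [AddCommMonoid α] (S : AddSubmonoid α) : Prop :=
  ∀ x ∈ S, x ≠ 0 → ∃ n : ℕ, IsLengthOf S x n

/-- The system of sets of lengths of `M`. -/
def systemOfLengths (M : AddSubmonoid ℚ) : Set (Set ℕ) :=
  {S | ∃ x ∈ M, lengthsOf M x = S}

/-- The elementary Puiseux monoid ⟨1/p : p prime⟩. -/
def elemPM : AddSubmonoid ℚ :=
  AddSubmonoid.closure {q : ℚ | ∃ p : ℕ, p.Prime ∧ q = 1 / p}

/-!
Since 0 is not a limit point of `M`, some `δ > 0` lies below every nonzero element of `M`. Then a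
factorization of `x` into `n` atoms forces `n • δ ≤ x`, which bounds the lengths of `x`; and an
element below `n • δ` that is not an atom splits into two nonzero summands below `(n - 1) • δ`, so
induction on `n` writes every nonzero element as a sum of atoms.
-/

theorem exists_gt_forall_le_of_not_accPt {α : Type*} [TopologicalSpace α] [LinearOrder α]
    [OrderTopology α] [NoMaxOrder α] {a : α} {s : Set α} (hs : ∀ x ∈ s, a ≤ x)
    (h : ¬AccPt a (Filter.principal s)) : ∃ u, a < u ∧ ∀ x ∈ s, x ≠ a → u ≤ x := by
  rw [accPt_iff_nhds] at h
  push Not at h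
  obtain ⟨U, hU, hUs⟩ := h
  obtain ⟨u, hau, hIco⟩ := exists_Ico_subset_of_mem_nhds hU (exists_gt a)
  exact ⟨u, hau, fun x hx hxa => le_of_not_gt fun hxu => hxa (hUs x ⟨hIco ⟨hs x hx, hxu⟩, hx⟩)⟩

section LengthsOf

variable {α : Type*} [AddCommMonoid α] {S : AddSubmonoid α}

theorem isLengthOf_add {u v : α} {a b : ℕ} (hu : IsLengthOf S u a) (hv : IsLengthOf S v b) :
    IsLengthOf S (u + v) (a + b) := by
  obtain ⟨f, hf, rfl⟩ := hu
  obtain ⟨g, hg, rfl⟩ := hv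
  refine ⟨Fin.append f g, Fin.addCases (by simpa using hf) (by simpa using hg), ?_⟩
  simp [Fin.sum_univ_add]

theorem exists_add_of_not_isAtomOf {x : α} (hx : x ∈ S) (hx0 : x ≠ 0) (h : ¬IsAtomOf S x) :
    ∃ u ∈ S, ∃ v ∈ S, x = u + v ∧ u ≠ 0 ∧ v ≠ 0 := by
  simpa [IsAtomOf, hx, hx0] using h

variable [PartialOrder α] {δ : α}

theorem nsmul_le_of_isLengthOf [IsOrderedAddMonoid α] (hδ : ∀ x ∈ S, x ≠ 0 → δ ≤ x) {x : α}
    {n : ℕ} (h : IsLengthOf S x n) : n • δ ≤ x := by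
  obtain ⟨f, hf, rfl⟩ := h
  simpa using Finset.univ.card_nsmul_le_sum f δ fun i _ => hδ (f i) (hf i).1 (hf i).2.1

theorem exists_isLengthOf_of_lt_nsmul [IsOrderedCancelAddMonoid α] (hδ0 : 0 < δ)
    (hδ : ∀ x ∈ S, x ≠ 0 → δ ≤ x) (n : ℕ) :
    ∀ x ∈ S, x ≠ 0 → x < n • δ → ∃ m, IsLengthOf S x m := by
  induction n with
  | zero =>
    intro x hx hx0 hlt
    rw [zero_nsmul] at hlt
    exact ((hδ0.trans_le (hδ x hx hx0)).asymm hlt).elim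
  | succ k ih =>
    intro x hx hx0 hlt
    by_cases hatom : IsAtomOf S x
    · exact ⟨1, fun _ => x, fun _ => hatom, by simp⟩
    obtain ⟨u, hu, v, hv, rfl, hu0, hv0⟩ := exists_add_of_not_isAtomOf hx hx0 hatom
    rw [succ_nsmul] at hlt
    have hu_lt : u < k • δ :=
      lt_of_add_lt_add_right ((add_le_add le_rfl (hδ v hv hv0)).trans_lt hlt)
    have hv_lt : v < k • δ :=
      lt_of_add_lt_add_right ((add_le_add le_rfl (hδ u hu hu0)).trans_lt (add_comm u v ▸ hlt))
    obtain ⟨a, ha⟩ := ih u hu hu0 hu_lt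
    obtain ⟨b, hb⟩ := ih v hv hv0 hv_lt
    exact ⟨a + b, isLengthOf_add ha hb⟩

variable [IsOrderedCancelAddMonoid α] [Archimedean α]

theorem atomicM_of_forall_le (hδ0 : 0 < δ) (hδ : ∀ x ∈ S, x ≠ 0 → δ ≤ x) : AtomicM S :=
  fun x hx hx0 =>
    let ⟨n, hn⟩ := exists_lt_nsmul hδ0 x
    exists_isLengthOf_of_lt_nsmul hδ0 hδ n x hx hx0 hn

theorem lengthsOf_finite_of_forall_le (hδ0 : 0 < δ) (hδ : ∀ x ∈ S, x ≠ 0 → δ ≤ x) (x : α) :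
    (lengthsOf S x).Finite := by
  obtain ⟨N, hN⟩ := exists_lt_nsmul hδ0 x
  refine (Set.finite_Iio N).subset fun n hn => Set.mem_Iio.2 <| lt_of_not_ge fun hNn => ?_
  exact (nsmul_le_nsmul_left hδ0.le hNn |>.trans (nsmul_le_of_isLengthOf hδ hn)).not_gt hN

end LengthsOf

/-- If 0 is not a limit point of a Puiseux monoid `M`, then `M` is a BF-monoid. -/
theorem stmt0 (M : AddSubmonoid ℚ) (hP : IsPuiseux M)
    (h0 : ¬ AccPt (0:ℚ) (Filter.principal (M : Set ℚ))) :
    AtomicM M ∧ ∀ x ∈ M, (lengthsOf M x).Finite := by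
  obtain ⟨δ, hδ0, hδ⟩ := exists_gt_forall_le_of_not_accPt hP h0
  exact ⟨atomicM_of_forall_le hδ0 hδ, fun x _ => lengthsOf_finite_of_forall_le hδ0 hδ x⟩
end

section
/- Every monoid homomorphism between two Puiseux monoids is given by multiplication by a nonnegative rational number: if M and N are additive submonoids of Q_{\ge 0} and f : M → N is an additive map with f(0) = 0, then there exists q ∈ Q_{\ge 0} such that f(x) = qx for all x ∈ M. -/
/-! Any two nonnegative rationals `x` and `a > 0` are commensurable: `m • x = n • a` for some
`m > 0`. Applying `f` to this relation gives `a * f x = x * f a`, so `f` is multiplication by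
`f a / a`, which is nonnegative because `N` is. -/

open scoped BigOperators

theorem Rat.exists_nsmul_eq_nsmul {x a : ℚ} (hx : 0 ≤ x) (ha : 0 < a) :
    ∃ m n : ℕ, m ≠ 0 ∧ m • x = n • a := by
  set r := x / a
  have hr : 0 ≤ r.num := Rat.num_nonneg.mpr (div_nonneg hx ha.le)
  refine ⟨r.den, r.num.toNat, r.den_ne_zero, ?_⟩
  have hnum : ((r.num.toNat : ℤ) : ℚ) = r.num := by rw [Int.toNat_of_nonneg hr]
  have hx_eq : x = r * a := (div_mul_cancel₀ x ha.ne').symm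
  rw [nsmul_eq_mul, nsmul_eq_mul, hx_eq, ← mul_assoc, mul_comm (r.den : ℚ), Rat.mul_den_eq_num,
    ← hnum, Int.cast_natCast]

theorem AddMonoidHom.mul_map_eq_of_nsmul_eq {A K : Type*} [AddMonoid A] [Field K] [CharZero K]
    (g f : A →+ K) {x a : A} {m n : ℕ} (hm : m ≠ 0) (h : m • x = n • a) :
    g a * f x = g x * f a := by
  have hg : (m : K) * g x = n * g a := by simpa only [map_nsmul, nsmul_eq_mul] using congrArg g h
  have hf : (m : K) * f x = n * f a := by simpa only [map_nsmul, nsmul_eq_mul] using congrArg f h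
  refine mul_left_cancel₀ (Nat.cast_ne_zero.mpr hm : (m : K) ≠ 0) ?_
  calc (m : K) * (g a * f x) = g a * (n * f a) := by rw [← hf]; ring
    _ = (m * g x) * f a := by rw [hg]; ring
    _ = m * (g x * f a) := by ring

theorem IsPuiseux.map_eq_div_mul {M : AddSubmonoid ℚ} (hM : IsPuiseux M) (f : M →+ ℚ) {a : M}
    (ha : (a : ℚ) ≠ 0) (x : M) : f x = f a / a * x := by
  obtain ⟨m, n, hm, hmn⟩ :=
    Rat.exists_nsmul_eq_nsmul (hM x x.2) (lt_of_le_of_ne (hM a a.2) ha.symm)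
  have hmn' : m • x = n • a := Subtype.ext (by simpa only [AddSubmonoidClass.coe_nsmul] using hmn)
  have key := M.subtype.mul_map_eq_of_nsmul_eq f hm hmn'
  simp only [AddSubmonoid.coe_subtype] at key
  rw [div_mul_eq_mul_div, eq_div_iff ha, mul_comm, key, mul_comm]

/-- Every additive monoid homomorphism between Puiseux monoids is multiplication
by a nonnegative rational. -/
theorem stmt2 (M N : AddSubmonoid ℚ) (hM : IsPuiseux M) (hN : IsPuiseux N)
    (f : M →+ N) :
    ∃ q : ℚ, 0 ≤ q ∧ ∀ x : M, ((f x : ℚ)) = q * (x : ℚ) := by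
  by_cases hMtriv : ∀ x : M, (x : ℚ) = 0
  · refine ⟨0, le_rfl, fun x => ?_⟩
    rw [show x = 0 from Subtype.ext (hMtriv x), map_zero]
    simp
  · push Not at hMtriv
    obtain ⟨a, ha⟩ := hMtriv
    exact ⟨f a / a, div_nonneg (hN _ (f a).2) (hM a a.2),
      hM.map_eq_div_mul (N.subtype.comp f) ha⟩
end

section
/- Let P and Q be disjoint infinite sets of prime numbers, and let M_P = ⟨a_p : p ∈ P⟩ and M_Q = ⟨b_q : q ∈ Q⟩ be Puiseux monoids such that for every p ∈ P the denominator of a_p (in lowest terms) is a nontrivial power of p, and for every q ∈ Q the denominator of b_q is a nontrivial power of q. Then M_P and M_Q are not isomorphic as monoids. -/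
open scoped BigOperators

/-
An isomorphism `M_P ≃ M_Q` of Puiseux monoids is multiplication by a nonzero rational `c`,
since any two elements `x, y` satisfy a relation `n • x = m • y`. Every denominator in `M_Q` has
all its prime factors in `Q`. But for a prime `p ∈ P` larger than the numerator of `c`, `p`
divides the denominator of `c * a_p`, an element of `M_Q`; hence `p ∈ Q`, contradicting
`P ∩ Q = ∅`.
-/

lemma isPuiseux_closure {S : Set ℚ} (hS : ∀ s ∈ S, 0 ≤ s) :
    IsPuiseux (AddSubmonoid.closure S) :=
  fun _ hx => AddSubmonoid.closure_induction hS le_rfl (fun _ _ _ _ => add_nonneg) hx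

lemma Rat.exists_nat_mul_eq_nat_mul {x y : ℚ} (hx : 0 ≤ x) (hy : 0 < y) :
    ∃ n m : ℕ, n ≠ 0 ∧ (n : ℚ) * x = m * y := by
  have hq : 0 ≤ x / y := div_nonneg hx hy.le
  refine ⟨(x / y).den, (x / y).num.toNat, (x / y).den_nz, ?_⟩
  have hm : ((x / y).num.toNat : ℚ) = (x / y).num := by
    exact_mod_cast Int.toNat_of_nonneg (Rat.num_nonneg.mpr hq)
  rw [hm, ← Rat.mul_den_eq_num]
  field_simp

lemma IsPuiseux.exists_eq_mul {M : AddSubmonoid ℚ} (hM : IsPuiseux M) (f : M →+ ℚ) :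
    ∃ c : ℚ, ∀ x : M, f x = c * x := by
  by_cases h : ∃ y : M, (y : ℚ) ≠ 0
  · obtain ⟨y, hy⟩ := h
    have hy0 : 0 < (y : ℚ) := lt_of_le_of_ne (hM y y.2) hy.symm
    refine ⟨f y / y, fun x => ?_⟩
    obtain ⟨n, m, hn, hxy⟩ := Rat.exists_nat_mul_eq_nat_mul (hM x x.2) hy0
    have hsmul : n • x = m • y :=
      Subtype.ext (by simpa only [AddSubmonoidClass.coe_nsmul, nsmul_eq_mul] using hxy)
    have hf : (n : ℚ) * f x = m * f y := by
      simpa only [map_nsmul, nsmul_eq_mul] using congrArg f hsmul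
    have hn' : (n : ℚ) ≠ 0 := Nat.cast_ne_zero.mpr hn
    rw [div_mul_eq_mul_div, eq_div_iff hy0.ne']
    apply mul_left_cancel₀ hn'
    linear_combination (y : ℚ) * hf - f y * hxy
  · simp only [ne_eq, not_exists, not_not] at h
    exact ⟨0, fun x => by rw [show x = 0 from Subtype.ext (h x), map_zero, zero_mul]⟩

def ratsWithDenPrimesIn (T : Set ℕ) : AddSubmonoid ℚ where
  carrier := {y | ∀ r : ℕ, r.Prime → r ∣ y.den → r ∈ T}
  zero_mem' := fun _ hr hr1 => absurd (Nat.dvd_one.mp hr1) hr.ne_one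
  add_mem' := fun {x y} hx hy r hr hrd =>
    (hr.dvd_mul.mp (hrd.trans (Rat.add_den_dvd x y))).elim (hx r hr) (hy r hr)

lemma closure_le_ratsWithDenPrimesIn {T : Set ℕ} (hT : ∀ q ∈ T, q.Prime) {b : ℕ → ℚ}
    (hb : ∀ q ∈ T, ∃ k : ℕ, (b q).den = q ^ k) :
    AddSubmonoid.closure (b '' T) ≤ ratsWithDenPrimesIn T := by
  rw [AddSubmonoid.closure_le]
  rintro _ ⟨q, hq, rfl⟩ r hr hrd
  obtain ⟨k, hk⟩ := hb q hq
  rw [hk] at hrd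
  exact (Nat.prime_dvd_prime_iff_eq hr (hT q hq)).mp (hr.dvd_of_dvd_pow hrd) ▸ hq

lemma Rat.not_dvd_num_of_natAbs_lt {c : ℚ} (hc : c ≠ 0) {p : ℕ} (hp : c.num.natAbs < p) :
    ¬ (p : ℤ) ∣ c.num := fun h =>
  Rat.num_ne_zero.mpr hc (Int.eq_zero_of_dvd_of_natAbs_lt_natAbs h (by simpa using hp))

lemma Rat.prime_dvd_den_mul {p : ℕ} (hp : p.Prime) {c a : ℚ} (hc : ¬ (p : ℤ) ∣ c.num)
    (ha : p ∣ a.den) : p ∣ (c * a).den := by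
  have hpZ : Prime (p : ℤ) := Nat.prime_iff_prime_int.mp hp
  have han : ¬ (p : ℤ) ∣ a.num := fun h =>
    hp.ne_one (Nat.eq_one_of_dvd_coprimes a.reduced (Int.natCast_dvd.mp h) ha)
  have h : (p : ℤ) ∣ c.num * a.num * (c * a).den := by
    rw [← Rat.mul_num_den']
    exact dvd_mul_of_dvd_right (Int.natCast_dvd_natCast.mpr ha) _
  rcases hpZ.dvd_mul.mp h with h | h
  · rcases hpZ.dvd_mul.mp h with h | h
    exacts [absurd h hc, absurd h han]
  · exact_mod_cast h

theorem stmt3_general (P Q : Set ℕ) (hP : ∀ p ∈ P, Nat.Prime p) (hQ : ∀ q ∈ Q, Nat.Prime q)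
    (hPi : P.Infinite) (hdisj : Disjoint P Q)
    (a b : ℕ → ℚ)
    (ha : ∀ p ∈ P, 0 < a p ∧ ∃ k : ℕ, 0 < k ∧ (a p).den = p ^ k)
    (hb : ∀ q ∈ Q, 0 < b q ∧ ∃ k : ℕ, 0 < k ∧ (b q).den = q ^ k) :
    ¬ Nonempty ((AddSubmonoid.closure (a '' P)) ≃+ (AddSubmonoid.closure (b '' Q))) := by
  rintro ⟨φ⟩
  have hgen : ∀ p ∈ P, a p ∈ AddSubmonoid.closure (a '' P) := fun p hp =>
    AddSubmonoid.subset_closure ⟨p, hp, rfl⟩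
  obtain ⟨c, hc⟩ := (isPuiseux_closure (by rintro _ ⟨p, hp, rfl⟩; exact (ha p hp).1.le)
    ).exists_eq_mul ((AddSubmonoid.closure (b '' Q)).subtype.comp φ.toAddMonoidHom)
  have hc0 : c ≠ 0 := by
    rintro rfl
    obtain ⟨p, hp⟩ := hPi.nonempty
    have hφ : φ ⟨a p, hgen p hp⟩ = 0 := Subtype.ext (by simpa using hc ⟨a p, hgen p hp⟩)
    exact (ha p hp).1.ne' (congrArg Subtype.val (φ.map_eq_zero_iff.mp hφ))
  obtain ⟨p, hpP, hpc⟩ := hPi.exists_gt c.num.natAbs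
  obtain ⟨-, k, hk, hden⟩ := ha p hpP
  have hpden : p ∣ (c * a p).den := Rat.prime_dvd_den_mul (hP p hpP)
    (Rat.not_dvd_num_of_natAbs_lt hc0 hpc) (hden ▸ dvd_pow_self p hk.ne')
  have hmem : c * a p ∈ AddSubmonoid.closure (b '' Q) := hc ⟨a p, hgen p hpP⟩ ▸ (φ _).2
  have hMQ := closure_le_ratsWithDenPrimesIn hQ fun q hq => ((hb q hq).2.imp fun _ => And.right)
  exact Set.disjoint_left.mp hdisj hpP (hMQ hmem p (hP p hpP) hpden)

/-- Puiseux monoids generated over disjoint infinite sets of primes, with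
generators whose denominators are nontrivial powers of the respective primes,
are non-isomorphic. -/
theorem stmt3 (P Q : Set ℕ) (hP : ∀ p ∈ P, Nat.Prime p) (hQ : ∀ q ∈ Q, Nat.Prime q)
    (hPi : P.Infinite) (hQi : Q.Infinite) (hdisj : Disjoint P Q)
    (a b : ℕ → ℚ)
    (ha : ∀ p ∈ P, 0 < a p ∧ ∃ k : ℕ, 0 < k ∧ (a p).den = p ^ k)
    (hb : ∀ q ∈ Q, 0 < b q ∧ ∃ k : ℕ, 0 < k ∧ (b q).den = q ^ k) :
    ¬ Nonempty ((AddSubmonoid.closure (a '' P)) ≃+ (AddSubmonoid.closure (b '' Q))) :=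
  stmt3_general P Q hP hQ hPi hdisj a b ha hb
end

section
/- A nontrivial Puiseux monoid M is finitely generated if and only if the set of denominators {d(x) : x ∈ M, x ≠ 0} is bounded. -/
open scoped BigOperators

/- Bounded denominators divide a common `N`, which places `M` inside `(1/N)ℕ ≅ ℕ`; submonoids of
`ℕ` are finitely generated. Conversely, denominators of sums divide the lcm of the summands'
denominators, so every element of `⟨T⟩` has denominator dividing `∏ t ∈ T, t.den`. -/

theorem Rat.den_dvd_of_mem_addSubmonoidClosure {s : Set ℚ} {n : ℕ} (hs : ∀ q ∈ s, q.den ∣ n)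
    {x : ℚ} (hx : x ∈ AddSubmonoid.closure s) : x.den ∣ n := by
  induction hx using AddSubmonoid.closure_induction with
  | mem q hq => exact hs q hq
  | zero => simp
  | add u v _ _ hu hv => exact (Rat.add_den_dvd_lcm u v).trans (Nat.lcm_dvd hu hv)

theorem Rat.exists_nsmul_inv_eq_of_den_dvd {q : ℚ} (hq : 0 ≤ q) {N : ℕ} (hN : N ≠ 0)
    (h : q.den ∣ N) : ∃ n : ℕ, n • (N : ℚ)⁻¹ = q := by
  obtain ⟨k, rfl⟩ := h
  refine ⟨q.num.toNat * k, ?_⟩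
  have hnum : ((q.num.toNat : ℕ) : ℚ) = q.num := by
    exact_mod_cast Int.toNat_of_nonneg (Rat.num_nonneg.mpr hq)
  have hk : (k : ℚ) ≠ 0 := by exact_mod_cast right_ne_zero_of_mul hN
  rw [nsmul_eq_mul, Nat.cast_mul, hnum, Nat.cast_mul, mul_inv, ← Rat.mul_den_eq_num]
  field_simp

theorem AddSubmonoid.fg_of_den_dvd {M : AddSubmonoid ℚ} (hP : IsPuiseux M) {N : ℕ} (hN : N ≠ 0)
    (h : ∀ x ∈ M, x.den ∣ N) : M.FG := by
  set f : ℕ →+ ℚ := multiplesHom ℚ (N : ℚ)⁻¹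
  have hle : M ≤ AddMonoidHom.mrange f := fun x hx =>
    Rat.exists_nsmul_inv_eq_of_den_dvd (hP x hx) hN (h x hx)
  rw [← AddSubmonoid.map_comap_eq_self hle]
  exact (Nat.addSubmonoid_fg _).map f

theorem stmt4_general (M : AddSubmonoid ℚ) (hP : IsPuiseux M) :
    M.FG ↔ ∃ B : ℕ, ∀ x ∈ M, x ≠ 0 → x.den ≤ B := by
  constructor
  · rintro ⟨T, rfl⟩
    refine ⟨∏ t ∈ T, t.den, fun x hx _ => Nat.le_of_dvd (Finset.prod_pos fun t _ => t.pos) ?_⟩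
    exact Rat.den_dvd_of_mem_addSubmonoidClosure (fun t ht => Finset.dvd_prod_of_mem _ ht) hx
  · rintro ⟨B, hB⟩
    refine AddSubmonoid.fg_of_den_dvd hP (Nat.factorial_ne_zero B) fun x hx => ?_
    rcases eq_or_ne x 0 with rfl | hx0
    · simp
    · exact Nat.dvd_factorial x.pos (hB x hx hx0)

/-- A nontrivial Puiseux monoid is finitely generated iff its set of
denominators of nonzero elements is bounded. -/
theorem stmt4 (M : AddSubmonoid ℚ) (hP : IsPuiseux M) (hnt : M ≠ ⊥) :
    M.FG ↔ ∃ B : ℕ, ∀ x ∈ M, x ≠ 0 → x.den ≤ B :=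
  stmt4_general M hP
end

section
/- Let M be a Puiseux monoid such that 0 is not a limit point of M \\ {0}. Then {2} belongs to the system of sets of lengths of M, i.e., there exists x ∈ M whose set of lengths is exactly {2}. -/
open scoped BigOperators

/-! If every nonzero element of `M` is at least `ε > 0`, the nonzero elements have a positive
real infimum `d`, so some nonzero `q ∈ M` lies below `3d/2`. Then `q` cannot split into two
nonzero elements (each is `≥ d > q/2`), and a factorization of `2q < 3d` has fewer than three
atoms, while it has neither none (`2q ≠ 0`) nor one (`2q = q + q` is not an atom). -/

theorem exists_forall_le_of_not_accPt {α : Type*} [TopologicalSpace α] [LinearOrder α]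
    [OrderTopology α] [NoMaxOrder α] {S : Set α} {a : α} (hS : ∀ y ∈ S, a ≤ y)
    (ha : ¬AccPt a (Filter.principal (S \ {a}))) : ∃ u > a, ∀ y ∈ S, y ≠ a → u ≤ y := by
  rw [accPt_iff_frequently, Filter.not_frequently] at ha
  obtain ⟨u, hau, hu⟩ := exists_Ico_subset_of_mem_nhds ha (exists_gt a)
  refine ⟨u, hau, fun y hy hya => not_lt.mp fun hyu => ?_⟩
  exact hu ⟨hS y hy, hyu⟩ ⟨hya, hy, hya⟩

theorem Rat.exists_lt_mul_of_pos_mem_lowerBounds {S : Set ℚ} (hS : S.Nonempty) {ε : ℚ}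
    (hε : 0 < ε) (hεS : ε ∈ lowerBounds S) {c : ℚ} (hc : 1 < c) :
    ∃ q ∈ S, ∀ y ∈ S, q < c * y := by
  set T : Set ℝ := (↑) '' S
  have hT : T.Nonempty := hS.image _
  have hεT : (ε : ℝ) ∈ lowerBounds T := by
    rintro _ ⟨y, hy, rfl⟩
    exact_mod_cast hεS hy
  have hd : (ε : ℝ) ≤ sInf T := le_csInf hT hεT
  have hlt : sInf T < c * sInf T := by
    have : (1 : ℝ) < c := by exact_mod_cast hc
    nlinarith [(Rat.cast_pos.mpr hε : (0 : ℝ) < ε)]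
  obtain ⟨_, ⟨q, hq, rfl⟩, hqd⟩ := (csInf_lt_iff ⟨(ε : ℝ), hεT⟩ hT).mp hlt
  refine ⟨q, hq, fun y hy => ?_⟩
  have hdy : sInf T ≤ y := csInf_le ⟨(ε : ℝ), hεT⟩ ⟨y, hy, rfl⟩
  have : (q : ℝ) < c * y := hqd.trans_le (by gcongr)
  exact_mod_cast this

section SmallElement

variable {α : Type*} [CommRing α] [LinearOrder α] [IsStrictOrderedRing α] {S : AddSubmonoid α}
  {q : α}

theorem isAtomOf_of_forall_lt (hq : q ∈ S) (hq0 : q ≠ 0)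
    (hmin : ∀ y ∈ S, y ≠ 0 → 2 * q < 3 * y) : IsAtomOf S q := by
  refine ⟨hq, hq0, fun u v hu hv huv => ?_⟩
  by_contra! h
  have hqq := hmin q hq hq0
  have hqu := hmin u hu h.1
  have hqv := hmin v hv h.2
  subst huv
  linarith

theorem lengthsOf_add_self_of_forall_lt (hq : q ∈ S) (hq0 : q ≠ 0)
    (hmin : ∀ y ∈ S, y ≠ 0 → 2 * q < 3 * y) : lengthsOf S (q + q) = {2} := by
  have hq_pos : 0 < q := by linarith [hmin q hq hq0]
  have hatom := isAtomOf_of_forall_lt hq hq0 hmin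
  ext n
  change IsLengthOf S (q + q) n ↔ n = 2
  refine ⟨fun ⟨f, hf, hsum⟩ => ?_, ?_⟩
  · have hn0 : n ≠ 0 := by
      rintro rfl
      simp only [Finset.univ_eq_empty, Finset.sum_empty] at hsum
      linarith
    have hn1 : n ≠ 1 := by
      rintro rfl
      rw [Fin.sum_univ_one] at hsum
      rcases (hf 0).2.2 q q hq hq (hsum.symm) with h | h <;> exact hq0 h
    have hn3 : (n : α) * (2 * q) < 3 * (q + q) := by
      have := Finset.sum_lt_sum_of_nonempty (Finset.univ_nonempty_iff.mpr ⟨⟨0, by omega⟩⟩)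
        fun i (_ : i ∈ Finset.univ) => hmin (f i) (hf i).1 (hf i).2.1
      simpa [hsum, Finset.mul_sum] using this
    have : (n : α) < 3 := by nlinarith
    have : n < 3 := by exact_mod_cast this
    omega
  · rintro rfl
    exact ⟨fun _ => q, fun _ => hatom, (Fin.sum_univ_two fun _ => q).symm⟩

end SmallElement

/-- If 0 is not a limit point of `M \ {0}` for a nontrivial Puiseux monoid `M`,
then `{2}` belongs to the system of sets of lengths of `M`. -/
theorem stmt5 (M : AddSubmonoid ℚ) (hP : IsPuiseux M) (hnt : M ≠ ⊥)
    (h0 : ¬ AccPt (0:ℚ) (Filter.principal ((M : Set ℚ) \ {0}))) :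
    ∃ x ∈ M, lengthsOf M x = {2} := by
  obtain ⟨ε, hε, hεM⟩ := exists_forall_le_of_not_accPt hP h0
  have hne : ((M : Set ℚ) \ {0}).Nonempty := by
    obtain ⟨x, hx, hx0⟩ := (M.bot_or_exists_ne_zero).resolve_left hnt
    exact ⟨x, hx, hx0⟩
  obtain ⟨q, ⟨hq, hq0⟩, hmin⟩ := Rat.exists_lt_mul_of_pos_mem_lowerBounds hne hε
    (fun y ⟨hy, hy0⟩ => hεM y hy hy0) (by norm_num : (1 : ℚ) < 3 / 2)
  refine ⟨q + q, M.add_mem hq hq, lengthsOf_add_self_of_forall_lt hq hq0 fun y hy hy0 => ?_⟩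
  linarith [hmin y ⟨hy, hy0⟩]
end

section
/- Let {M_n} be a sequence of atomic Puiseux monoids with A(M_n) ⊆ A(M_{n+1}) for all n, where A denotes the set of atoms. Then M = ⋃_n M_n is an atomic Puiseux monoid and A(M) = ⋃_n A(M_n). -/
open scoped BigOperators

/-! Because `M n` is atomic, it is generated by its atoms, so the inclusion of atoms forces
`M n ≤ M (n + 1)` and the union is directed. A decomposition `a = u + v` in the union then takes
place in a single `M k` with `k ≥ n`, where an atom `a` of `M n` is still an atom. -/

section Atoms

variable {α : Type*} [AddCommMonoid α]

theorem IsAtomOf.of_le {S T : AddSubmonoid α} {a : α} (hST : S ≤ T) (ha : a ∈ S)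
    (hT : IsAtomOf T a) : IsAtomOf S a :=
  ⟨ha, hT.2.1, fun u v hu hv => hT.2.2 u v (hST hu) (hST hv)⟩

theorem IsLengthOf.of_isAtomOf_imp {S T : AddSubmonoid α} {x : α} {n : ℕ}
    (hST : ∀ a, IsAtomOf S a → IsAtomOf T a) (hx : IsLengthOf S x n) : IsLengthOf T x n :=
  let ⟨f, hf, hsum⟩ := hx
  ⟨f, fun i => hST _ (hf i), hsum⟩

theorem AtomicM.le_of_isAtomOf_imp {S T : AddSubmonoid α} (hS : AtomicM S)
    (hST : ∀ a, IsAtomOf S a → IsAtomOf T a) : S ≤ T := by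
  intro x hx
  rcases eq_or_ne x 0 with rfl | hx0
  · exact T.zero_mem
  · obtain ⟨n, f, hf, rfl⟩ := hS x hx hx0
    exact T.sum_mem fun i _ => (hST _ (hf i)).1

theorem nonempty_of_mem_iSup_of_ne_zero {ι : Sort*} {M : ι → AddSubmonoid α} {x : α}
    (hx : x ∈ ⨆ i, M i) (hx0 : x ≠ 0) : Nonempty ι := by
  by_contra h
  rw [not_nonempty_iff] at h
  rw [iSup_of_empty, AddSubmonoid.mem_bot] at hx
  exact hx0 hx

end Atoms

section DirectedUnion

variable {α ι : Type*} [AddCommMonoid α] [Preorder ι] [IsDirectedOrder ι]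
  {M : ι → AddSubmonoid α}

theorem exists_ge_mem_mem_of_mem_iSup [Nonempty ι] (hM : Monotone M) (i : ι) {u v : α}
    (hu : u ∈ ⨆ j, M j) (hv : v ∈ ⨆ j, M j) : ∃ k, i ≤ k ∧ u ∈ M k ∧ v ∈ M k := by
  obtain ⟨j, hj⟩ := (AddSubmonoid.mem_iSup_of_directed hM.directed_le).1 hu
  obtain ⟨l, hl⟩ := (AddSubmonoid.mem_iSup_of_directed hM.directed_le).1 hv
  obtain ⟨m, hjm, hlm⟩ := exists_ge_ge j l
  obtain ⟨k, hik, hmk⟩ := exists_ge_ge i m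
  exact ⟨k, hik, hM (hjm.trans hmk) hj, hM (hlm.trans hmk) hl⟩

theorem isAtomOf_iSup_iff (hM : Monotone M) (hA : Monotone fun i => {a | IsAtomOf (M i) a})
    {a : α} : IsAtomOf (⨆ i, M i) a ↔ ∃ i, IsAtomOf (M i) a := by
  constructor
  · intro ha
    have := nonempty_of_mem_iSup_of_ne_zero ha.1 ha.2.1
    obtain ⟨i, hi⟩ := (AddSubmonoid.mem_iSup_of_directed hM.directed_le).1 ha.1
    exact ⟨i, ha.of_le (le_iSup M i) hi⟩
  · rintro ⟨i, ha⟩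
    have : Nonempty ι := ⟨i⟩
    refine ⟨le_iSup M i ha.1, ha.2.1, fun u v hu hv huv => ?_⟩
    obtain ⟨k, hik, huk, hvk⟩ := exists_ge_mem_mem_of_mem_iSup hM i hu hv
    exact (hA hik ha).2.2 u v huk hvk huv

theorem atomicM_iSup (hM : Monotone M) (hA : Monotone fun i => {a | IsAtomOf (M i) a})
    (hAt : ∀ i, AtomicM (M i)) : AtomicM (⨆ i, M i) := by
  intro x hx hx0
  have := nonempty_of_mem_iSup_of_ne_zero hx hx0
  obtain ⟨i, hi⟩ := (AddSubmonoid.mem_iSup_of_directed hM.directed_le).1 hx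
  obtain ⟨n, hn⟩ := hAt i x hi hx0
  exact ⟨n, hn.of_isAtomOf_imp fun a ha => (isAtomOf_iSup_iff hM hA).2 ⟨i, ha⟩⟩

end DirectedUnion

theorem IsPuiseux.iSup {ι : Sort*} {M : ι → AddSubmonoid ℚ} (hM : ∀ i, IsPuiseux (M i)) :
    IsPuiseux (⨆ i, M i) := fun _ hx =>
  AddSubmonoid.iSup_induction M (motive := fun x => 0 ≤ x) hx hM le_rfl
    fun _ _ => add_nonneg

/-- The union of an ascending (with respect to atoms) sequence of atomic Puiseux
monoids is an atomic Puiseux monoid whose atoms are the union of the atoms. -/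
theorem stmt6 (M : ℕ → AddSubmonoid ℚ) (hP : ∀ n, IsPuiseux (M n))
    (hAt : ∀ n, AtomicM (M n))
    (hmono : ∀ n, ∀ a : ℚ, IsAtomOf (M n) a → IsAtomOf (M (n+1)) a) :
    ∃ U : AddSubmonoid ℚ,
      (U : Set ℚ) = ⋃ n, (M n : Set ℚ) ∧
      IsPuiseux U ∧ AtomicM U ∧
      ∀ a : ℚ, IsAtomOf U a ↔ ∃ n, IsAtomOf (M n) a := by
  have hA : Monotone fun n => {a | IsAtomOf (M n) a} := monotone_nat_of_le_succ hmono
  have hM : Monotone M := fun m n hmn => (hAt m).le_of_isAtomOf_imp (hA hmn)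
  exact ⟨⨆ n, M n, AddSubmonoid.coe_iSup_of_directed hM.directed_le, .iSup hP,
    atomicM_iSup hM hA hAt, fun _ => isAtomOf_iSup_iff hM hA⟩
end

section
/- There exists an atomic Puiseux monoid M such that for every x ∈ M, the cardinality of the set of lengths L(x) is either 1 or infinite, and both values occur; in particular there exists a completely non-half-factorial atomic Puiseux monoid (every nonzero non-atom has infinite set of lengths). -/
open scoped BigOperators

/-!
Every element of `⟨1/p : p prime⟩` is a sum of reciprocals `1/p` over a multiset of primes, and
the atoms are exactly the `1/p`, so the lengths of `x` are the sizes of such representations.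
Two representations of the same number have, for each prime `q`, multiplicities of `q` that are
congruent mod `q`: the difference of their `q`-parts is a sum of fractions whose denominators are
prime to `q`. So if some representation of `x` uses `1/q` at least `q` times, trading `q · (1/q)`
for `r · (1/r)` for every prime `r` gives infinitely many lengths; otherwise all multiplicities
are below their modulus, the representation is unique, and `x` has exactly one length.
-/

open Multiset

-- A multiset `s` of primes encodes the factorization `∑ p ∈ s, 1/p` in `elemPM`.
def recipSum (s : Multiset Nat.Primes) : ℚ :=
  (s.map fun p : Nat.Primes => ((p : ℕ) : ℚ)⁻¹).sum

@[simp] lemma recipSum_zero : recipSum 0 = 0 := rfl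

@[simp] lemma recipSum_cons (p : Nat.Primes) (s : Multiset Nat.Primes) :
    recipSum (p ::ₘ s) = ((p : ℕ) : ℚ)⁻¹ + recipSum s := by
  simp [recipSum]

@[simp] lemma recipSum_add (s t : Multiset Nat.Primes) :
    recipSum (s + t) = recipSum s + recipSum t := by
  simp [recipSum]

@[simp] lemma recipSum_singleton (p : Nat.Primes) : recipSum {p} = ((p : ℕ) : ℚ)⁻¹ := by
  simp [recipSum]

@[simp] lemma recipSum_replicate (n : ℕ) (p : Nat.Primes) :
    recipSum (replicate n p) = n / (p : ℕ) := by
  simp [recipSum, div_eq_mul_inv]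

lemma inv_prime_pos (p : Nat.Primes) : 0 < ((p : ℕ) : ℚ)⁻¹ := by
  have := p.2.pos
  positivity

lemma recipSum_nonneg (s : Multiset Nat.Primes) : 0 ≤ recipSum s :=
  Multiset.sum_nonneg fun _ hx => by
    obtain ⟨p, -, rfl⟩ := Multiset.mem_map.1 hx
    exact (inv_prime_pos p).le

@[simp] lemma recipSum_eq_zero_iff {s : Multiset Nat.Primes} : recipSum s = 0 ↔ s = 0 := by
  refine ⟨fun h => ?_, fun h => h ▸ recipSum_zero⟩
  induction s using Multiset.induction with
  | empty => rfl
  | cons p s _ =>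
    rw [recipSum_cons] at h
    linarith [inv_prime_pos p, recipSum_nonneg s]

lemma recipSum_eq_count_div_add (s : Multiset Nat.Primes) (q : Nat.Primes) :
    recipSum s = count q s / (q : ℕ) + recipSum (s.filter (· ≠ q)) := by
  conv_lhs => rw [← filter_add_not (· = q) s]
  rw [recipSum_add, filter_eq', recipSum_replicate]

lemma coprime_den_recipSum_of_notMem {q : Nat.Primes} {s : Multiset Nat.Primes} (hq : q ∉ s) :
    (q : ℕ).Coprime (recipSum s).den := by
  induction s using Multiset.induction with
  | empty => simp
  | cons p s ih =>
    obtain ⟨hqp, hqs⟩ : q ≠ p ∧ q ∉ s := by simpa [not_or] using hq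
    have hcop : (q : ℕ).Coprime p :=
      (Nat.coprime_primes q.2 p.2).2 fun h => hqp (Subtype.ext h)
    rw [recipSum_cons]
    refine Nat.Coprime.coprime_dvd_right (Rat.add_den_dvd _ _) (Nat.Coprime.mul_right ?_ (ih hqs))
    rwa [Rat.inv_natCast_den_of_pos p.2.pos]

lemma Int.dvd_of_coprime_den_div {n : ℤ} {q : ℕ} (hq : q ≠ 0)
    (h : q.Coprime ((n : ℚ) / q).den) : (q : ℤ) ∣ n := by
  have hden : ((n : ℚ) / q).den ∣ q := by
    simpa [div_eq_mul_inv, Rat.inv_natCast_den, hq] using Rat.mul_den_dvd (n : ℚ) (q : ℚ)⁻¹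
  have h1 : ((n : ℚ) / q).den = 1 := Nat.eq_one_of_dvd_coprimes h.symm dvd_rfl hden
  exact (Rat.den_div_intCast_eq_one_iff n q (by exact_mod_cast hq)).1 (by exact_mod_cast h1)

theorem count_modEq_of_recipSum_eq {s t : Multiset Nat.Primes} (h : recipSum s = recipSum t)
    (q : Nat.Primes) : count q s ≡ count q t [MOD q] := by
  rw [recipSum_eq_count_div_add s q, recipSum_eq_count_div_add t q] at h
  have hdiff : (((count q t : ℤ) - count q s : ℤ) : ℚ) / (q : ℕ) =
      recipSum (s.filter (· ≠ q)) - recipSum (t.filter (· ≠ q)) := by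
    push_cast; rw [sub_div]; linarith
  refine Nat.modEq_iff_dvd.2 (Int.dvd_of_coprime_den_div q.2.ne_zero ?_)
  rw [hdiff]
  exact Nat.Coprime.coprime_dvd_right (Rat.sub_den_dvd _ _)
    (Nat.Coprime.mul_right (coprime_den_recipSum_of_notMem (by simp))
      (coprime_den_recipSum_of_notMem (by simp)))

lemma inv_prime_mem_elemPM (p : Nat.Primes) : ((p : ℕ) : ℚ)⁻¹ ∈ elemPM :=
  AddSubmonoid.subset_closure ⟨p, p.2, (one_div _).symm⟩

lemma recipSum_mem_elemPM (s : Multiset Nat.Primes) : recipSum s ∈ elemPM := by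
  induction s using Multiset.induction with
  | empty => exact zero_mem _
  | cons p s ih => exact recipSum_cons p s ▸ add_mem (inv_prime_mem_elemPM p) ih

lemma mem_elemPM_iff {x : ℚ} : x ∈ elemPM ↔ ∃ s, recipSum s = x := by
  refine ⟨fun hx => ?_, fun ⟨s, hs⟩ => hs ▸ recipSum_mem_elemPM s⟩
  induction hx using AddSubmonoid.closure_induction with
  | mem y hy =>
    obtain ⟨p, hp, rfl⟩ := hy
    exact ⟨{⟨p, hp⟩}, (recipSum_singleton ⟨p, hp⟩).trans (one_div _).symm⟩
  | zero => exact ⟨0, rfl⟩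
  | add y z _ _ ihy ihz =>
    obtain ⟨⟨s, rfl⟩, ⟨t, rfl⟩⟩ := And.intro ihy ihz
    exact ⟨s + t, recipSum_add s t⟩

lemma isAtomOf_inv_prime (p : Nat.Primes) : IsAtomOf elemPM ((p : ℕ) : ℚ)⁻¹ := by
  refine ⟨inv_prime_mem_elemPM p, (inv_prime_pos p).ne', fun u v hu hv huv => ?_⟩
  obtain ⟨⟨s, rfl⟩, ⟨t, rfl⟩⟩ := And.intro (mem_elemPM_iff.1 hu) (mem_elemPM_iff.1 hv)
  have hsum : recipSum (s + t) = recipSum {p} := by rw [recipSum_add, recipSum_singleton, huv]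
  -- `p` occurs in `s + t` since its count is `≡ 1 [MOD p]`; the remaining atoms then sum to `0`.
  have hp_mem : p ∈ s + t := by
    have hcount := count_modEq_of_recipSum_eq hsum p
    rw [count_singleton_self] at hcount
    refine count_pos.1 (Nat.pos_of_ne_zero fun h0 => ?_)
    rw [h0, Nat.ModEq, Nat.zero_mod, Nat.mod_eq_of_lt p.2.one_lt] at hcount
    exact zero_ne_one hcount
  obtain ⟨w, hw⟩ := exists_cons_of_mem hp_mem
  have hw0 : w = 0 := by simpa [hw] using hsum
  have hcard : card s + card t = 1 := by simp [← card_add, hw, hw0]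
  rcases Nat.add_eq_one_iff.1 hcard with ⟨hs, -⟩ | ⟨-, ht⟩
  · simp [card_eq_zero.1 hs]
  · simp [card_eq_zero.1 ht]

lemma exists_eq_inv_prime_of_isAtomOf {a : ℚ} (ha : IsAtomOf elemPM a) :
    ∃ p : Nat.Primes, a = ((p : ℕ) : ℚ)⁻¹ := by
  obtain ⟨hmem, hne, hirr⟩ := ha
  obtain ⟨s, rfl⟩ := mem_elemPM_iff.1 hmem
  obtain ⟨p, hp⟩ := exists_mem_of_ne_zero (mt recipSum_eq_zero_iff.2 hne)
  obtain ⟨t, rfl⟩ := exists_cons_of_mem hp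
  refine ⟨p, ?_⟩
  rcases hirr _ _ (inv_prime_mem_elemPM p) (recipSum_mem_elemPM t) (recipSum_cons p t) with h | h
  · exact absurd h (inv_prime_pos p).ne'
  · simp [recipSum_eq_zero_iff.1 h]

lemma isLengthOf_sum_card {α : Type*} [AddCommMonoid α] {S : AddSubmonoid α} {m : Multiset α}
    (hm : ∀ a ∈ m, IsAtomOf S a) : IsLengthOf S m.sum (card m) := by
  obtain ⟨l, rfl⟩ := Quot.exists_rep m
  refine ⟨fun i => l.get (Fin.cast (by simp) i), fun i => hm _ (List.get_mem _ _), ?_⟩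
  simp only [List.get_eq_getElem]
  exact (Fin.sum_univ_getElem l).symm

lemma isLengthOf_elemPM_iff {x : ℚ} {n : ℕ} :
    IsLengthOf elemPM x n ↔ ∃ s, recipSum s = x ∧ card s = n := by
  constructor
  · rintro ⟨f, hf, rfl⟩
    choose p hp using fun i => exists_eq_inv_prime_of_isAtomOf (hf i)
    refine ⟨Finset.univ.val.map p, ?_, by simp⟩
    simp only [recipSum, Fin.univ_val_map, map_coe, List.map_ofFn, sum_coe, hp,
      Finset.sum_eq_multiset_sum]
    rfl
  · rintro ⟨s, rfl, rfl⟩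
    simpa [recipSum] using
      isLengthOf_sum_card (S := elemPM) (m := s.map fun p : Nat.Primes => ((p : ℕ) : ℚ)⁻¹)
        (by simpa using fun p _ => isAtomOf_inv_prime p)

lemma lengthsOf_recipSum_infinite_of_le_count {s : Multiset Nat.Primes} {q : Nat.Primes}
    (hq : (q : ℕ) ≤ count q s) :
    (lengthsOf elemPM (recipSum s)).Infinite := by
  obtain ⟨u, rfl⟩ := Multiset.le_iff_exists_add.1 (le_count_iff_replicate_le.1 hq)
  refine Set.infinite_of_injective_forall_mem (f := fun r : Nat.Primes => (r : ℕ) + card u)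
    (fun r r' h => Subtype.ext (by simpa using h)) fun r => ?_
  refine isLengthOf_elemPM_iff.2 ⟨replicate r r + u, ?_, by simp⟩
  have hr : ((r : ℕ) : ℚ) ≠ 0 := by exact_mod_cast r.2.ne_zero
  have hq : ((q : ℕ) : ℚ) ≠ 0 := by exact_mod_cast q.2.ne_zero
  simp [div_self hr, div_self hq]

lemma lengthsOf_recipSum_eq_singleton {s : Multiset Nat.Primes}
    (hs : ∀ t, recipSum t = recipSum s → ∀ q : Nat.Primes, count q t < q) :
    lengthsOf elemPM (recipSum s) = {card s} := by
  have huniq : ∀ t, recipSum t = recipSum s → t = s := fun t ht => ext.2 fun q =>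
    Nat.ModEq.eq_of_lt_of_lt (count_modEq_of_recipSum_eq ht q) (hs t ht q) (hs s rfl q)
  ext n
  simp only [lengthsOf, Set.mem_ofPred_eq, isLengthOf_elemPM_iff, Set.mem_singleton_iff]
  exact ⟨fun ⟨t, ht, htn⟩ => huniq t ht ▸ htn.symm, fun hn => ⟨s, rfl, hn.symm⟩⟩

/-- There is an atomic Puiseux monoid in which every set of lengths has
cardinality 1 or is infinite, and both possibilities occur. -/
theorem stmt8 :
    ∃ M : AddSubmonoid ℚ, IsPuiseux M ∧ AtomicM M ∧
      (∀ x ∈ M, (lengthsOf M x).ncard = 1 ∨ (lengthsOf M x).Infinite) ∧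
      (∃ x ∈ M, (lengthsOf M x).ncard = 1) ∧
      (∃ x ∈ M, (lengthsOf M x).Infinite) := by
  refine ⟨elemPM, fun x hx => ?_, fun x hx _ => ?_, fun x hx => ?_, ⟨0, zero_mem _, ?_⟩,
    ⟨1, ?_⟩⟩
  · obtain ⟨s, rfl⟩ := mem_elemPM_iff.1 hx
    exact recipSum_nonneg s
  · obtain ⟨s, rfl⟩ := mem_elemPM_iff.1 hx
    exact ⟨card s, isLengthOf_elemPM_iff.2 ⟨s, rfl, rfl⟩⟩
  · obtain ⟨s, rfl⟩ := mem_elemPM_iff.1 hx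
    by_cases h : ∃ t, recipSum t = recipSum s ∧ ∃ q : Nat.Primes, (q : ℕ) ≤ count q t
    · obtain ⟨t, ht, q, hq⟩ := h
      exact .inr (ht ▸ lengthsOf_recipSum_infinite_of_le_count hq)
    · push Not at h
      exact .inl (by rw [lengthsOf_recipSum_eq_singleton h, Set.ncard_singleton])
  · have h0 : lengthsOf elemPM (recipSum 0) = {0} :=
      lengthsOf_recipSum_eq_singleton fun t ht q => by simp [recipSum_eq_zero_iff.1 ht, q.2.pos]
    rw [← recipSum_zero, h0, Set.ncard_singleton]
  · let two : Nat.Primes := ⟨2, Nat.prime_two⟩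
    have h1 : recipSum (replicate 2 two) = 1 := by
      rw [recipSum_replicate]
      exact div_self (by norm_num [two])
    exact h1 ▸ ⟨recipSum_mem_elemPM _,
      lengthsOf_recipSum_infinite_of_le_count (q := two) (count_replicate_self two 2).ge⟩
end

section
/- The intersection of the systems of sets of lengths over all nontrivial atomic Puiseux monoids equals { {0}, {1} }. -/
open scoped BigOperators

namespace SSL

lemma atom_pos {M : AddSubmonoid ℚ} (hM : IsPuiseux M) {b : ℚ} (hb : IsAtomOf M b) :
    0 < b := by
  rcases hb with ⟨hbM, hb0, _⟩
  exact lt_of_le_of_ne (hM b hbM) (Ne.symm hb0)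

lemma sum_atoms_mem {M : AddSubmonoid ℚ} {n : ℕ} {f : Fin n → ℚ}
    (hf : ∀ i, IsAtomOf M (f i)) : (∑ i, f i) ∈ M :=
  AddSubmonoid.sum_mem M (fun i _ => (hf i).1)

lemma sum_atoms_pos {M : AddSubmonoid ℚ} (hM : IsPuiseux M) {n : ℕ} (hn : 0 < n)
    {f : Fin n → ℚ} (hf : ∀ i, IsAtomOf M (f i)) : 0 < ∑ i, f i := by
  haveI : Nonempty (Fin n) := Fin.pos_iff_nonempty.mp hn
  exact Finset.sum_pos (fun i _ => atom_pos hM (hf i)) Finset.univ_nonempty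

lemma lengths_zero {M : AddSubmonoid ℚ} (hM : IsPuiseux M) : lengthsOf M 0 = {0} := by
  ext n
  simp only [lengthsOf, Set.mem_setOf_eq, Set.mem_singleton_iff]
  constructor
  · rintro ⟨f, hf, hsum⟩
    by_contra hn0
    have hn : 0 < n := Nat.pos_of_ne_zero hn0
    have := sum_atoms_pos hM hn hf
    rw [← hsum] at this
    exact lt_irrefl 0 this
  · rintro rfl
    exact ⟨Fin.elim0, fun i => i.elim0, by simp⟩

lemma lengths_atom {M : AddSubmonoid ℚ} (hM : IsPuiseux M) {b : ℚ} (hb : IsAtomOf M b) :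
    lengthsOf M b = {1} := by
  ext n
  simp only [lengthsOf, Set.mem_setOf_eq, Set.mem_singleton_iff]
  constructor
  · rintro ⟨f, hf, hsum⟩
    match n, f, hf, hsum with
    | 0, f, hf, hsum =>
      exfalso; apply hb.2.1; simpa using hsum
    | 1, f, hf, hsum => rfl
    | (k+2), f, hf, hsum =>
      exfalso
      rw [Fin.sum_univ_succ] at hsum
      rcases hb.2.2 (f 0) (∑ i : Fin (k+1), f i.succ) (hf 0).1
        (AddSubmonoid.sum_mem M (fun i _ => (hf i.succ).1)) hsum with h | h
      · exact (hf 0).2.1 h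
      · have : 0 < ∑ i : Fin (k+1), f i.succ :=
          sum_atoms_pos hM (Nat.succ_pos k) (fun i => hf i.succ)
        rw [h] at this; exact lt_irrefl 0 this
  · rintro rfl
    exact ⟨fun _ => b, fun _ => hb, by simp⟩

lemma exists_atom {M : AddSubmonoid ℚ} (hbot : M ≠ ⊥) (hat : AtomicM M) :
    ∃ b, IsAtomOf M b := by
  have : ∃ x ∈ M, x ≠ (0:ℚ) := by
    by_contra h
    push_neg at h
    apply hbot
    ext x
    simp only [AddSubmonoid.mem_bot]
    exact ⟨fun hx => h x hx, fun hx => hx ▸ M.zero_mem⟩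
  rcases this with ⟨x, hxM, hx0⟩
  rcases hat x hxM hx0 with ⟨n, f, hf, hsum⟩
  rcases n with _ | n
  · exfalso; apply hx0; simpa using hsum
  · exact ⟨f 0, hf 0⟩

lemma zero_mem_system {M : AddSubmonoid ℚ} (hM : IsPuiseux M) :
    ({0} : Set ℕ) ∈ systemOfLengths M :=
  ⟨0, M.zero_mem, lengths_zero hM⟩

lemma one_mem_system {M : AddSubmonoid ℚ} (hM : IsPuiseux M) (hbot : M ≠ ⊥)
    (hat : AtomicM M) : ({1} : Set ℕ) ∈ systemOfLengths M := by
  rcases exists_atom hbot hat with ⟨b, hb⟩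
  exact ⟨b, hb.1, lengths_atom hM hb⟩

end SSL

namespace SSL

/-! ### The natural numbers monoid -/

def NM : AddSubmonoid ℚ where
  carrier := Set.range (fun n : ℕ => (n : ℚ))
  zero_mem' := ⟨0, by simp⟩
  add_mem' := by
    rintro _ _ ⟨m, rfl⟩ ⟨n, rfl⟩
    exact ⟨m + n, by push_cast; ring⟩

lemma NM_mem {x : ℚ} : x ∈ NM ↔ ∃ n : ℕ, x = (n : ℚ) := by
  constructor
  · rintro ⟨n, rfl⟩; exact ⟨n, rfl⟩
  · rintro ⟨n, rfl⟩; exact ⟨n, rfl⟩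

lemma NM_puiseux : IsPuiseux NM := by
  rintro x hx
  rcases NM_mem.mp hx with ⟨n, rfl⟩
  positivity

lemma NM_one_atom : IsAtomOf NM 1 := by
  refine ⟨NM_mem.mpr ⟨1, by norm_num⟩, one_ne_zero, ?_⟩
  rintro u v hu hv huv
  rcases NM_mem.mp hu with ⟨m, rfl⟩
  rcases NM_mem.mp hv with ⟨n, rfl⟩
  have : m + n = 1 := by
    have : ((m + n : ℕ) : ℚ) = ((1:ℕ):ℚ) := by push_cast; linarith
    exact_mod_cast this
  rcases Nat.add_eq_one_iff.mp this with ⟨rfl, rfl⟩ | ⟨rfl, rfl⟩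
  · left; norm_num
  · right; norm_num

lemma NM_atom_iff {b : ℚ} : IsAtomOf NM b ↔ b = 1 := by
  constructor
  · rintro ⟨hbM, hb0, hmin⟩
    rcases NM_mem.mp hbM with ⟨n, rfl⟩
    match n with
    | 0 => exact absurd (by norm_num) hb0
    | 1 => norm_num
    | (k+2) =>
      exfalso
      have h : ((k+2 : ℕ) : ℚ) = ((1:ℕ):ℚ) + ((k+1:ℕ):ℚ) := by push_cast; ring
      rcases hmin _ _ (NM_mem.mpr ⟨1, rfl⟩) (NM_mem.mpr ⟨k+1, rfl⟩) h with h1 | h1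
      · norm_num at h1
      · exact absurd h1 (by positivity)
  · rintro rfl; exact NM_one_atom

lemma NM_lengths (n : ℕ) : lengthsOf NM (n : ℚ) = {n} := by
  ext m
  simp only [lengthsOf, Set.mem_setOf_eq, Set.mem_singleton_iff]
  constructor
  · rintro ⟨f, hf, hsum⟩
    have hone : ∀ i, f i = 1 := fun i => NM_atom_iff.mp (hf i)
    have : (n : ℚ) = (m : ℚ) := by
      rw [hsum]
      simp [hone]
    exact_mod_cast this.symm
  · rintro rfl
    exact ⟨fun _ => 1, fun _ => NM_one_atom, by simp⟩

lemma NM_atomic : AtomicM NM := by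
  rintro x hx hx0
  rcases NM_mem.mp hx with ⟨n, rfl⟩
  exact ⟨n, fun _ => 1, fun _ => NM_one_atom, by simp⟩

lemma NM_ne_bot : NM ≠ ⊥ := by
  intro h
  have : (1:ℚ) ∈ NM := NM_mem.mpr ⟨1, by norm_num⟩
  rw [h, AddSubmonoid.mem_bot] at this
  norm_num at this

lemma NM_system {S : Set ℕ} (hS : S ∈ systemOfLengths NM) : ∃ n : ℕ, S = {n} := by
  rcases hS with ⟨x, hx, rfl⟩
  rcases NM_mem.mp hx with ⟨n, rfl⟩
  exact ⟨n, NM_lengths n⟩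

end SSL

namespace SSL

/-! ### The interval monoid `{0} ∪ [1, ∞)` -/

def IM : AddSubmonoid ℚ where
  carrier := {x : ℚ | x = 0 ∨ 1 ≤ x}
  zero_mem' := Or.inl rfl
  add_mem' := by
    rintro a b (rfl | ha) (rfl | hb)
    · left; norm_num
    · right; simpa using hb
    · right; simpa using ha
    · right; linarith

lemma IM_mem {x : ℚ} : x ∈ IM ↔ x = 0 ∨ 1 ≤ x := Iff.rfl

lemma IM_puiseux : IsPuiseux IM := by
  rintro x hx
  rcases IM_mem.mp hx with rfl | hx <;> linarith

lemma IM_ne_bot : IM ≠ ⊥ := by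
  intro h
  have : (1:ℚ) ∈ IM := IM_mem.mpr (Or.inr le_rfl)
  rw [h, AddSubmonoid.mem_bot] at this
  norm_num at this

lemma IM_atom_of (q : ℚ) (h1 : 1 ≤ q) (h2 : q < 2) : IsAtomOf IM q := by
  refine ⟨IM_mem.mpr (Or.inr h1), by intro h; rw [h] at h1; norm_num at h1, ?_⟩
  rintro u v hu hv huv
  rcases IM_mem.mp hu with rfl | hu'
  · left; rfl
  rcases IM_mem.mp hv with rfl | hv'
  · right; rfl
  exfalso; linarith

lemma IM_atom_bounds {b : ℚ} (hb : IsAtomOf IM b) : 1 ≤ b ∧ b < 2 := by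
  rcases hb with ⟨hbM, hb0, hmin⟩
  rcases IM_mem.mp hbM with rfl | hb1
  · exact absurd rfl hb0
  refine ⟨hb1, ?_⟩
  by_contra h
  push_neg at h
  rcases hmin 1 (b - 1) (IM_mem.mpr (Or.inr le_rfl))
      (IM_mem.mpr (Or.inr (by linarith))) (by ring) with h1 | h1
  · norm_num at h1
  · have : b = 1 := by linarith [sub_eq_zero.mp h1]
    rw [this] at h; norm_num at h

lemma IM_length_bounds {x : ℚ} {m : ℕ} (hm : IsLengthOf IM x m) (hmpos : 0 < m) :
    (m : ℚ) ≤ x ∧ x < 2 * m := by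
  rcases hm with ⟨f, hf, rfl⟩
  haveI : Nonempty (Fin m) := Fin.pos_iff_nonempty.mp hmpos
  constructor
  · calc (m : ℚ) = ∑ _i : Fin m, 1 := by simp
    _ ≤ ∑ i, f i := Finset.sum_le_sum (fun i _ => (IM_atom_bounds (hf i)).1)
  · calc ∑ i, f i < ∑ _i : Fin m, 2 :=
        Finset.sum_lt_sum_of_nonempty
          (Finset.univ_nonempty (α := Fin m))
          (fun i _ => (IM_atom_bounds (hf i)).2)
    _ = 2 * m := by simp [mul_comm]

lemma IM_length_of (x : ℚ) (m : ℕ) (hmpos : 0 < m) (h1 : (m:ℚ) ≤ x) (h2 : x < 2 * m) :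
    IsLengthOf IM x m := by
  refine ⟨fun _ => x / m, fun i => ?_, ?_⟩
  · apply IM_atom_of
    · rw [le_div_iff₀ (by positivity)]; linarith
    · rw [div_lt_iff₀ (by positivity)]; linarith
  · rw [Finset.sum_const, Finset.card_univ, Fintype.card_fin]
    have hm0 : (m:ℚ) ≠ 0 := by exact_mod_cast hmpos.ne'
    rw [nsmul_eq_mul]
    field_simp

lemma IM_atomic : AtomicM IM := by
  rintro x hx hx0
  have hx1 : 1 ≤ x := (IM_mem.mp hx).resolve_left hx0
  have hfl : 1 ≤ ⌊x⌋₊ := (Nat.one_le_floor_iff x).mpr hx1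
  refine ⟨⌊x⌋₊, IM_length_of x ⌊x⌋₊ hfl (Nat.floor_le (by linarith)) ?_⟩
  have h1 : x < ⌊x⌋₊ + 1 := Nat.lt_floor_add_one x
  have h2 : (1:ℚ) ≤ ⌊x⌋₊ := by exact_mod_cast hfl
  linarith

lemma IM_no_singleton {m : ℕ} (hm : 3 ≤ m) {x : ℚ} (hx : x ∈ IM)
    (h : lengthsOf IM x = {m}) : False := by
  have hmm : m ∈ lengthsOf IM x := by rw [h]; rfl
  have hmpos : 0 < m := by omega
  obtain ⟨h1, h2⟩ := IM_length_bounds hmm hmpos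
  have hlt : x < (m : ℚ) + 1 := by
    by_contra hc
    push_neg at hc
    have : (m+1 : ℕ) ∈ lengthsOf IM x := by
      apply IM_length_of x (m+1) (by omega) (by push_cast; linarith) (by push_cast; linarith)
    rw [h] at this
    simp only [Set.mem_singleton_iff] at this
    omega
  have hm1 : (m - 1 : ℕ) ∈ lengthsOf IM x := by
    apply IM_length_of x (m-1) (by omega)
    · push_cast [Nat.cast_sub (by omega : 1 ≤ m)]
      linarith
    · push_cast [Nat.cast_sub (by omega : 1 ≤ m)]
      have : (3:ℚ) ≤ (m:ℚ) := by exact_mod_cast hm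
      linarith
  rw [h] at hm1
  simp only [Set.mem_singleton_iff] at hm1
  omega

end SSL

namespace SSL

namespace W

structure D where
  f : ℕ → ℚ
  k : ℕ → ℕ
  Q : ℕ

noncomputable def prm (t : ℕ) (d : D) : ℕ :=
  (Nat.exists_infinite_primes (9^(t+1) + d.Q + 9)).choose

def NN (t : ℕ) (d : D) : ℕ := d.k (Nat.unpair (t-1)).1 + d.k (Nat.unpair (t-1)).2

noncomputable def step (t : ℕ) (d : D) : D where
  f := fun idx => if idx = 2*t - 1 then ((3 * prm t d * NN t d + 1 : ℕ) : ℚ) / ((9 * prm t d * d.Q : ℕ) : ℚ)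
       else if idx = 2*t then ((3 * prm t d * NN t d - 2 : ℕ) : ℚ) / ((9 * prm t d * d.Q : ℕ) : ℚ)
       else d.f idx
  k := fun idx => if idx = 2*t - 1 then (3 * prm t d * NN t d + 1) * d.Q
       else if idx = 2*t then (3 * prm t d * NN t d - 2) * d.Q
       else d.k idx * (9 * prm t d * d.Q)
  Q := 9 * prm t d * d.Q * d.Q

noncomputable def S : ℕ → D
  | 0 => { f := fun i => if i = 0 then 1 else 0,
           k := fun i => if i = 0 then 1 else 0,
           Q := 1 }
  | (t+1) => step (t+1) (S t)

/-- the stage of index `i` -/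
def stg (i : ℕ) : ℕ := (i+1)/2

/-- the global atom function -/
noncomputable def a (i : ℕ) : ℚ := (S (stg i)).f i

noncomputable def pT (t : ℕ) : ℕ := prm t (S (t-1))
noncomputable def NT (t : ℕ) : ℕ := NN t (S (t-1))
noncomputable def AT (t : ℕ) : ℕ := 3 * pT t * NT t + 1
noncomputable def CT (t : ℕ) : ℕ := 3 * pT t * NT t - 2

lemma S_succ (s : ℕ) : S (s+1) = step (s+1) (S s) := rfl

lemma pT_succ (s : ℕ) : pT (s+1) = prm (s+1) (S s) := rfl
lemma NT_succ (s : ℕ) : NT (s+1) = NN (s+1) (S s) := rfl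

lemma pT_spec (s : ℕ) :
    9^(s+2) + (S s).Q + 9 ≤ pT (s+1) ∧ (pT (s+1)).Prime :=
  (Nat.exists_infinite_primes (9^(s+2) + (S s).Q + 9)).choose_spec

lemma Sf_x (s : ℕ) :
    (S (s+1)).f (2*(s+1)-1)
      = ((AT (s+1) : ℕ) : ℚ) / ((9 * pT (s+1) * (S s).Q : ℕ) : ℚ) := by
  show (step (s+1) (S s)).f (2*(s+1)-1) = _
  simp only [step, if_pos rfl]
  rfl

lemma Sf_z (s : ℕ) :
    (S (s+1)).f (2*(s+1))
      = ((CT (s+1) : ℕ) : ℚ) / ((9 * pT (s+1) * (S s).Q : ℕ) : ℚ) := by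
  show (step (s+1) (S s)).f (2*(s+1)) = _
  have h : 2*(s+1) ≠ 2*(s+1) - 1 := by omega
  simp only [step, if_neg h, if_pos rfl]
  rfl

lemma Sf_old (s idx : ℕ) (h : idx ≤ 2*s) : (S (s+1)).f idx = (S s).f idx := by
  show (step (s+1) (S s)).f idx = _
  have h1 : idx ≠ 2*(s+1) - 1 := by omega
  have h2 : idx ≠ 2*(s+1) := by omega
  simp only [step, if_neg h1, if_neg h2]

lemma Sk_x (s : ℕ) : (S (s+1)).k (2*(s+1)-1) = AT (s+1) * (S s).Q := by
  show (step (s+1) (S s)).k (2*(s+1)-1) = _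
  simp only [step, if_pos rfl]; rfl

lemma Sk_z (s : ℕ) : (S (s+1)).k (2*(s+1)) = CT (s+1) * (S s).Q := by
  show (step (s+1) (S s)).k (2*(s+1)) = _
  have h : 2*(s+1) ≠ 2*(s+1) - 1 := by omega
  simp only [step, if_neg h, if_pos rfl]; rfl

lemma Sk_old (s idx : ℕ) (h : idx ≤ 2*s) :
    (S (s+1)).k idx = (S s).k idx * (9 * pT (s+1) * (S s).Q) := by
  show (step (s+1) (S s)).k idx = _
  have h1 : idx ≠ 2*(s+1) - 1 := by omega
  have h2 : idx ≠ 2*(s+1) := by omega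
  simp only [step, if_neg h1, if_neg h2]; rfl

lemma SQ_succ (s : ℕ) : (S (s+1)).Q = 9 * pT (s+1) * (S s).Q * (S s).Q := rfl

lemma f_stab : ∀ t s, s ≤ t → ∀ i, i ≤ 2*s → (S t).f i = (S s).f i := by
  intro t
  induction t with
  | zero => intro s hs i hi; interval_cases s; rfl
  | succ t ih =>
    intro s hs i hi
    rcases Nat.eq_or_lt_of_le hs with rfl | hlt
    · rfl
    · have hs' : s ≤ t := by omega
      rw [Sf_old t i (by omega), ih s hs' i hi]

lemma a_eq (t i : ℕ) (h : i ≤ 2*t) : a i = (S t).f i := by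
  have h1 : stg i ≤ t := by unfold stg; omega
  have h2 : i ≤ 2 * stg i := by unfold stg; omega
  unfold a
  exact (f_stab t (stg i) h1 i h2).symm


/-- the master invariant -/
def Inv (t : ℕ) : Prop :=
  1 ≤ (S t).Q ∧ ∀ i, i ≤ 2*t →
    (0 < (S t).f i ∧ (S t).f i ≤ 1 ∧ 1 ≤ (9:ℚ)^(stg i) * (S t).f i ∧
     (S t).f i * ((S t).Q : ℚ) = ((S t).k i : ℚ) ∧ 1 ≤ (S t).k i)

lemma inv_zero : Inv 0 := by
  constructor
  · exact le_refl 1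
  · intro i hi
    have : i = 0 := by omega
    subst this
    refine ⟨by norm_num [S], by norm_num [S], by norm_num [S, stg], by norm_num [S], by norm_num [S]⟩

lemma S0_Q : (S 0).Q = 1 := rfl
lemma S0_f (i : ℕ) : (S 0).f i = if i = 0 then 1 else 0 := rfl
lemma S0_k (i : ℕ) : (S 0).k i = if i = 0 then 1 else 0 := rfl

attribute [irreducible] prm step S

lemma nine_pow_atom {s su : ℕ} (hsu : su ≤ s) {u : ℚ} (hu : 1 ≤ (9:ℚ)^su * u) (hupos : 0 < u) :
    1 ≤ (9:ℚ)^s * u := by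
  have h9 : (9:ℚ)^s = 9^(s - su) * 9^su := by
    rw [← pow_add]; congr 1; omega
  have h1 : (1:ℚ) ≤ 9^(s-su) := one_le_pow₀ (by norm_num)
  calc (1:ℚ) ≤ 9^su * u := hu
  _ ≤ 9^(s-su) * (9^su * u) := le_mul_of_one_le_left (by positivity) h1
  _ = 9^s * u := by rw [h9]; ring

lemma cast_pos_of_le {m : ℕ} (h : 1 ≤ m) : (0:ℚ) < (m:ℚ) := by exact_mod_cast h

/-- pure arithmetic facts about the new atoms -/
lemma newAtomFacts (p N Q : ℕ) (u v : ℚ) (s su : ℕ)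
    (hp : 9 ≤ p) (hQ : 1 ≤ Q) (hNval : (N:ℚ) = (u+v)*(Q:ℚ)) (hN2 : 2 ≤ N)
    (hu0 : 0 < u) (hu1 : u ≤ 1) (hv0 : 0 < v) (hv1 : v ≤ 1)
    (hsu : su ≤ s) (hupow : 1 ≤ (9:ℚ)^su * u) :
    (0 < ((3*p*N+1 : ℕ):ℚ) / ((9*p*Q : ℕ):ℚ)
      ∧ ((3*p*N+1 : ℕ):ℚ)/((9*p*Q:ℕ):ℚ) ≤ 1
      ∧ 1 ≤ (9:ℚ)^(s+1) * (((3*p*N+1 :ℕ):ℚ)/((9*p*Q:ℕ):ℚ)))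
    ∧ (0 < ((3*p*N-2 : ℕ):ℚ) / ((9*p*Q : ℕ):ℚ)
      ∧ ((3*p*N-2 : ℕ):ℚ)/((9*p*Q:ℕ):ℚ) ≤ 1
      ∧ 1 ≤ (9:ℚ)^(s+1) * (((3*p*N-2:ℕ):ℚ)/((9*p*Q:ℕ):ℚ)))
    ∧ (((3*p*N+1 : ℕ):ℚ)/((9*p*Q:ℕ):ℚ)) * ((9*p*Q*Q : ℕ):ℚ) = (((3*p*N+1)*Q : ℕ):ℚ)
    ∧ (((3*p*N-2 : ℕ):ℚ)/((9*p*Q:ℕ):ℚ)) * ((9*p*Q*Q : ℕ):ℚ) = (((3*p*N-2)*Q : ℕ):ℚ) := by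
  have hp0 : 0 < p := by omega
  have h3pN2 : 2 ≤ 3*p*N := by
    have h1 : N ≤ p*N := Nat.le_mul_of_pos_left N hp0
    have h2 : p*N ≤ 3*(p*N) := Nat.le_mul_of_pos_left _ (by norm_num)
    calc 2 ≤ N := hN2
    _ ≤ p*N := h1
    _ ≤ 3*(p*N) := h2
    _ = 3*p*N := by ring
  have hpq : (9:ℚ) ≤ (p:ℚ) := by exact_mod_cast hp
  have hQq : (1:ℚ) ≤ (Q:ℚ) := by exact_mod_cast hQ
  have hNq : (2:ℚ) ≤ (N:ℚ) := by exact_mod_cast hN2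
  have hQ0 : (0:ℚ) < (Q:ℚ) := by linarith
  have hp0q : (0:ℚ) < (p:ℚ) := by linarith
  have hN0 : (0:ℚ) < (N:ℚ) := by linarith
  have hAq : ((3*p*N+1 : ℕ):ℚ) = 3*(p:ℚ)*(N:ℚ)+1 := by push_cast; ring
  have hCq : ((3*p*N-2 : ℕ):ℚ) = 3*(p:ℚ)*(N:ℚ)-2 := by
    push_cast [Nat.cast_sub h3pN2]; ring
  have hdq : ((9*p*Q : ℕ):ℚ) = 9*(p:ℚ)*(Q:ℚ) := by push_cast; ring
  have hd0 : (0:ℚ) < 9*(p:ℚ)*(Q:ℚ) := by positivity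
  have hNle : (N:ℚ) ≤ 2*(Q:ℚ) := by
    rw [hNval]
    have := mul_le_mul_of_nonneg_right (show u+v ≤ 2 by linarith) hQ0.le
    linarith
  have hpN1 : (1:ℚ) ≤ (p:ℚ)*(N:ℚ) := by
    have := mul_le_mul hpq hNq (by norm_num : (0:ℚ) ≤ 2) (by positivity : (0:ℚ) ≤ (p:ℚ))
    linarith
  have hpQ1 : (1:ℚ) ≤ (p:ℚ)*(Q:ℚ) := by
    have := mul_le_mul hpq hQq (by norm_num : (0:ℚ) ≤ 1) (by positivity : (0:ℚ) ≤ (p:ℚ))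
    linarith
  have hpNQ : (1:ℚ)*(Q:ℚ) ≤ ((p:ℚ)*(N:ℚ))*(Q:ℚ) := mul_le_mul_of_nonneg_right hpN1 hQ0.le
  have hA_le : 3*(p:ℚ)*(N:ℚ)+1 ≤ 9*(p:ℚ)*(Q:ℚ) := by
    have h1 := mul_le_mul_of_nonneg_left hNle (by positivity : (0:ℚ) ≤ 3*(p:ℚ))
    linarith [hpQ1, h1]
  have hC_le : 3*(p:ℚ)*(N:ℚ)-2 ≤ 9*(p:ℚ)*(Q:ℚ) := by linarith
  have hC_pos : (0:ℚ) < 3*(p:ℚ)*(N:ℚ)-2 := by linarith [hpN1]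
  have hA_pos : (0:ℚ) < 3*(p:ℚ)*(N:ℚ)+1 := by linarith [hpN1]
  have hxge_core : (N:ℚ)*(9*(p:ℚ)*(Q:ℚ)) ≤ (3*(p:ℚ)*(N:ℚ)+1)*(9*(Q:ℚ)) := by
    have h1 : (0:ℚ) ≤ (p:ℚ)*(N:ℚ)*(Q:ℚ) := by positivity
    nlinarith [h1, hQ0.le]
  have hzge_core : (N:ℚ)*(9*(p:ℚ)*(Q:ℚ)) ≤ (3*(p:ℚ)*(N:ℚ)-2)*(9*(Q:ℚ)) := by
    nlinarith [hpNQ]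
  have huN : u ≤ (N:ℚ)/(Q:ℚ) := by
    rw [hNval, mul_div_assoc, div_self (ne_of_gt hQ0)]
    linarith
  have h9s : (0:ℚ) < (9:ℚ)^s := by positivity
  have h9u : 1 ≤ (9:ℚ)^s * u := by
    have h9 : (9:ℚ)^s = 9^(s - su) * 9^su := by rw [← pow_add]; congr 1; omega
    have h1 : (1:ℚ) ≤ 9^(s-su) := one_le_pow₀ (by norm_num)
    calc (1:ℚ) ≤ 9^su * u := hupow
    _ ≤ 9^(s-su) * (9^su * u) := le_mul_of_one_le_left (by positivity) h1
    _ = 9^s * u := by rw [h9]; ring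
  have h9NQ : 1 ≤ (9:ℚ)^s * ((N:ℚ)/(Q:ℚ)) :=
    le_trans h9u (mul_le_mul_of_nonneg_left huN (le_of_lt h9s))
  have key : (9:ℚ)^(s+1) * ((N:ℚ)/(9*(Q:ℚ))) = (9:ℚ)^s * ((N:ℚ)/(Q:ℚ)) := by
    rw [pow_succ]; field_simp
  have hxge : (N:ℚ)/(9*(Q:ℚ)) ≤ (3*(p:ℚ)*(N:ℚ)+1)/(9*(p:ℚ)*(Q:ℚ)) := by
    rw [div_le_div_iff₀ (by positivity) hd0]
    calc (N:ℚ)*(9*(p:ℚ)*(Q:ℚ)) ≤ (3*(p:ℚ)*(N:ℚ)+1)*(9*(Q:ℚ)) := hxge_core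
    _ = (3*(p:ℚ)*(N:ℚ)+1)*(9*(Q:ℚ)) := rfl
  have hzge : (N:ℚ)/(9*(Q:ℚ)) ≤ (3*(p:ℚ)*(N:ℚ)-2)/(9*(p:ℚ)*(Q:ℚ)) := by
    rw [div_le_div_iff₀ (by positivity) hd0]
    exact hzge_core
  refine ⟨⟨?_, ?_, ?_⟩, ⟨?_, ?_, ?_⟩, ?_, ?_⟩
  · rw [hAq, hdq]; positivity
  · rw [hAq, hdq, div_le_one hd0]; exact hA_le
  · rw [hAq, hdq]
    calc (1:ℚ) ≤ (9:ℚ)^s * ((N:ℚ)/(Q:ℚ)) := h9NQ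
    _ = (9:ℚ)^(s+1) * ((N:ℚ)/(9*(Q:ℚ))) := key.symm
    _ ≤ (9:ℚ)^(s+1) * ((3*(p:ℚ)*(N:ℚ)+1)/(9*(p:ℚ)*(Q:ℚ))) :=
        mul_le_mul_of_nonneg_left hxge (by positivity)
  · rw [hCq, hdq]; exact div_pos hC_pos hd0
  · rw [hCq, hdq, div_le_one hd0]; exact hC_le
  · rw [hCq, hdq]
    calc (1:ℚ) ≤ (9:ℚ)^s * ((N:ℚ)/(Q:ℚ)) := h9NQ
    _ = (9:ℚ)^(s+1) * ((N:ℚ)/(9*(Q:ℚ))) := key.symm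
    _ ≤ (9:ℚ)^(s+1) * ((3*(p:ℚ)*(N:ℚ)-2)/(9*(p:ℚ)*(Q:ℚ))) :=
        mul_le_mul_of_nonneg_left hzge (by positivity)
  · rw [hAq, hdq]
    have h9pQ0 : ((9*p*Q*Q : ℕ):ℚ) = (9*(p:ℚ)*(Q:ℚ))*(Q:ℚ) := by push_cast; ring
    have hrhs : (((3*p*N+1)*Q : ℕ):ℚ) = (3*(p:ℚ)*(N:ℚ)+1)*(Q:ℚ) := by push_cast; ring
    rw [h9pQ0, hrhs]
    field_simp
  · rw [hCq, hdq]
    have h9pQ0 : ((9*p*Q*Q : ℕ):ℚ) = (9*(p:ℚ)*(Q:ℚ))*(Q:ℚ) := by push_cast; ring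
    have hrhs : (((3*p*N-2)*Q : ℕ):ℚ) = (3*(p:ℚ)*(N:ℚ)-2)*(Q:ℚ) := by
      push_cast [Nat.cast_sub h3pN2]; ring
    rw [h9pQ0, hrhs]
    field_simp

lemma hp9T (s : ℕ) : 9 ≤ pT (s+1) := by
  have hple := (pT_spec s).1
  have he : 1 ≤ 9^(s+2) := Nat.one_le_pow _ _ (by norm_num)
  omega

lemma AT_def (s : ℕ) : AT (s+1) = 3 * pT (s+1) * NT (s+1) + 1 := rfl
lemma CT_def (s : ℕ) : CT (s+1) = 3 * pT (s+1) * NT (s+1) - 2 := rfl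
lemma NT_def (s : ℕ) : NT (s+1) = (S s).k (Nat.unpair s).1 + (S s).k (Nat.unpair s).2 := rfl

lemma inv_succ (s : ℕ) (IH : Inv s) : Inv (s+1) := by
  obtain ⟨hQ, hI⟩ := IH
  have hp9 := hp9T s
  have hi0le : (Nat.unpair s).1 ≤ 2*s := le_trans (Nat.unpair_left_le s) (by omega)
  have hj0le : (Nat.unpair s).2 ≤ 2*s := le_trans (Nat.unpair_right_le s) (by omega)
  obtain ⟨hu_pos, hu_le, hu_pow, hu_k, hu_k1⟩ := hI _ hi0le
  obtain ⟨hv_pos, hv_le, hv_pow, hv_k, hv_k1⟩ := hI _ hj0le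
  have hN2 : 2 ≤ NT (s+1) := by rw [NT_def]; omega
  have hNval : ((NT (s+1)) : ℚ)
      = ((S s).f (Nat.unpair s).1 + (S s).f (Nat.unpair s).2) * ((S s).Q : ℚ) := by
    rw [NT_def]
    push_cast
    rw [← hu_k, ← hv_k]; ring
  have hstgi0 : stg (Nat.unpair s).1 ≤ s := by
    have : (Nat.unpair s).1 ≤ s := Nat.unpair_left_le s
    unfold stg; omega
  obtain ⟨⟨hx0, hx1, hx9⟩, ⟨hz0, hz1, hz9⟩, hkx, hkz⟩ :=
    newAtomFacts (pT (s+1)) (NT (s+1)) ((S s).Q)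
      ((S s).f (Nat.unpair s).1) ((S s).f (Nat.unpair s).2) s (stg (Nat.unpair s).1)
      hp9 hQ hNval hN2 hu_pos hu_le hv_pos hv_le hstgi0 hu_pow
  refine ⟨?_, ?_⟩
  · rw [SQ_succ s]
    have hp0 : 0 < pT (s+1) := by omega
    have h0 : 0 < 9 * pT (s+1) * (S s).Q * (S s).Q := by positivity
    omega
  intro i hi
  rcases lt_or_ge i (2*s+1) with hlow | hhigh
  · -- old index
    have hile : i ≤ 2*s := by omega
    obtain ⟨h1, h2, h3, h4, h5⟩ := hI i hile
    rw [Sf_old s i hile, Sk_old s i hile]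
    refine ⟨h1, h2, h3, ?_, ?_⟩
    · rw [SQ_succ s]
      push_cast
      linear_combination (9*((pT (s+1)):ℚ)*(((S s).Q):ℚ)) * h4
    · calc 1 ≤ (S s).k i := h5
      _ ≤ (S s).k i * (9 * pT (s+1) * (S s).Q) := Nat.le_mul_of_pos_right _ (by positivity)
  · -- new indices
    have hstg : stg i = s+1 := by unfold stg; omega
    have hcase : i = 2*(s+1) - 1 ∨ i = 2*(s+1) := by omega
    rcases hcase with rfl | rfl
    · rw [Sf_x s, Sk_x s, AT_def, SQ_succ s, hstg]
      exact ⟨hx0, hx1, hx9, hkx, by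
        have : 1 ≤ (3 * pT (s+1) * NT (s+1) + 1) := by omega
        calc 1 ≤ 3 * pT (s+1) * NT (s+1) + 1 := this
        _ ≤ (3 * pT (s+1) * NT (s+1) + 1) * (S s).Q := Nat.le_mul_of_pos_right _ (by omega)⟩
    · rw [Sf_z s, Sk_z s, CT_def, SQ_succ s, hstg]
      have hC1 : 1 ≤ 3 * pT (s+1) * NT (s+1) - 2 := by
        have h1 : NT (s+1) ≤ pT (s+1) * NT (s+1) := Nat.le_mul_of_pos_left _ (by omega)
        have h2 : pT (s+1) * NT (s+1) ≤ 3*(pT (s+1) * NT (s+1)) := Nat.le_mul_of_pos_left _ (by norm_num)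
        have h3 : 3*(pT (s+1) * NT (s+1)) = 3 * pT (s+1) * NT (s+1) := by ring
        omega
      exact ⟨hz0, hz1, hz9, hkz, by
        calc 1 ≤ 3 * pT (s+1) * NT (s+1) - 2 := hC1
        _ ≤ (3 * pT (s+1) * NT (s+1) - 2) * (S s).Q := Nat.le_mul_of_pos_right _ (by omega)⟩

lemma inv (t : ℕ) : Inv t := by
  induction t with
  | zero => exact inv_zero
  | succ s ih => exact inv_succ s ih


lemma a_zero : a 0 = 1 := by
  show (S (stg 0)).f 0 = 1
  have : stg 0 = 0 := rfl
  rw [this, S0_f]; norm_num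

lemma a_facts (i : ℕ) : 0 < a i ∧ a i ≤ 1 ∧ 1 ≤ (9:ℚ)^(stg i) * a i := by
  obtain ⟨hQ, hI⟩ := inv (stg i)
  have hle : i ≤ 2 * stg i := by unfold stg; omega
  obtain ⟨h1, h2, h3, _, _⟩ := hI i hle
  exact ⟨h1, h2, h3⟩

lemma a_pos (i : ℕ) : 0 < a i := (a_facts i).1
lemma a_le_one (i : ℕ) : a i ≤ 1 := (a_facts i).2.1

lemma a_kEq (t i : ℕ) (h : i ≤ 2*t) :
    a i * (((S t).Q : ℕ) : ℚ) = (((S t).k i : ℕ) : ℚ) := by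
  obtain ⟨hQ, hI⟩ := inv t
  rw [a_eq t i h]
  exact (hI i h).2.2.2.1

lemma Q_pos (t : ℕ) : 1 ≤ (S t).Q := (inv t).1

lemma k_pos (t i : ℕ) (h : i ≤ 2*t) : 1 ≤ (S t).k i := (inv t).2 i h |>.2.2.2.2

/-- the fundamental relation: every pair of atoms is a sum of three atoms -/
lemma pair_relation (s : ℕ) :
    a ((Nat.unpair s).1) + a ((Nat.unpair s).2)
      = 2 * a (2*(s+1)-1) + a (2*(s+1)) := by
  have hi0le : (Nat.unpair s).1 ≤ 2*s := le_trans (Nat.unpair_left_le s) (by omega)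
  have hj0le : (Nat.unpair s).2 ≤ 2*s := le_trans (Nat.unpair_right_le s) (by omega)
  obtain ⟨hQ, hI⟩ := inv s
  obtain ⟨_, _, _, hu_k, hu_k1⟩ := hI _ hi0le
  obtain ⟨_, _, _, hv_k, hv_k1⟩ := hI _ hj0le
  have hp9 := hp9T s
  have hN2 : 2 ≤ NT (s+1) := by rw [NT_def]; omega
  have h3pN2 : 2 ≤ 3 * pT (s+1) * NT (s+1) := by
    have h1 : NT (s+1) ≤ pT (s+1) * NT (s+1) := Nat.le_mul_of_pos_left _ (by omega)
    have h3 : 3*(pT (s+1) * NT (s+1)) = 3 * pT (s+1) * NT (s+1) := by ring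
    have h2 : pT (s+1) * NT (s+1) ≤ 3*(pT (s+1) * NT (s+1)) := Nat.le_mul_of_pos_left _ (by norm_num)
    omega
  have hax : a (2*(s+1)-1) = ((AT (s+1) : ℕ):ℚ) / ((9 * pT (s+1) * (S s).Q : ℕ):ℚ) := by
    rw [a_eq (s+1) _ (by omega), Sf_x s]
  have haz : a (2*(s+1)) = ((CT (s+1) : ℕ):ℚ) / ((9 * pT (s+1) * (S s).Q : ℕ):ℚ) := by
    rw [a_eq (s+1) _ (by omega), Sf_z s]
  have hau : a ((Nat.unpair s).1) = (S s).f (Nat.unpair s).1 := a_eq s _ hi0le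
  have hav : a ((Nat.unpair s).2) = (S s).f (Nat.unpair s).2 := a_eq s _ hj0le
  have hNval : ((NT (s+1)) : ℚ)
      = ((S s).f (Nat.unpair s).1 + (S s).f (Nat.unpair s).2) * ((S s).Q : ℚ) := by
    rw [NT_def]; push_cast; rw [← hu_k, ← hv_k]; ring
  have hQ0 : (0:ℚ) < ((S s).Q : ℚ) := by exact_mod_cast hQ
  have hp0 : (0:ℚ) < ((pT (s+1)) : ℚ) := by
    have : (0:ℕ) < pT (s+1) := by omega
    exact_mod_cast this
  have h9p : (9:ℚ) * ((pT (s+1)):ℚ) ≠ 0 := by positivity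
  have hdenq : ((9 * pT (s+1) * (S s).Q : ℕ):ℚ)
      = (9 * ((pT (s+1)):ℚ)) * (((S s).Q):ℚ) := by push_cast; ring
  have h2A : 2 * ((AT (s+1) : ℕ):ℚ) + ((CT (s+1) : ℕ):ℚ)
      = (9 * ((pT (s+1)):ℚ)) * ((NT (s+1)):ℚ) := by
    rw [AT_def, CT_def]
    push_cast [Nat.cast_sub h3pN2]
    ring
  have huv : (S s).f (Nat.unpair s).1 + (S s).f (Nat.unpair s).2
      = ((NT (s+1)):ℚ)/(((S s).Q):ℚ) := by
    rw [hNval, mul_div_assoc, div_self (ne_of_gt hQ0), mul_one]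
  rw [hax, haz, hau, hav, huv, hdenq]
  calc ((NT (s+1)):ℚ)/(((S s).Q):ℚ)
      = ((9 * ((pT (s+1)):ℚ)) * ((NT (s+1)):ℚ)) / ((9 * ((pT (s+1)):ℚ)) * (((S s).Q):ℚ)) :=
        (mul_div_mul_left _ _ h9p).symm
    _ = (2 * ((AT (s+1) : ℕ):ℚ) + ((CT (s+1) : ℕ):ℚ)) / ((9 * ((pT (s+1)):ℚ)) * (((S s).Q):ℚ)) := by
        rw [h2A]
    _ = 2 * (((AT (s+1) : ℕ):ℚ) / ((9 * ((pT (s+1)):ℚ)) * (((S s).Q):ℚ)))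
        + ((CT (s+1) : ℕ):ℚ) / ((9 * ((pT (s+1)):ℚ)) * (((S s).Q):ℚ)) := by
        ring


lemma k_dvd_old (s i : ℕ) (h : i ≤ 2*s) : pT (s+1) ∣ (S (s+1)).k i := by
  rw [Sk_old s i h]
  exact Dvd.dvd.mul_left (Dvd.intro_left _ rfl |>.mul_right _) _

lemma p_not_dvd_Q (s : ℕ) : ¬ (pT (s+1) ∣ (S s).Q) := by
  intro h
  have h1 := Nat.le_of_dvd (by have := Q_pos s; omega) h
  have h2 := (pT_spec s).1
  have he : 1 ≤ 9^(s+2) := Nat.one_le_pow _ _ (by norm_num)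
  omega

lemma p_not_dvd_A (s : ℕ) : ¬ (pT (s+1) ∣ AT (s+1)) := by
  rw [AT_def]
  intro h
  have h2 : pT (s+1) ∣ 3 * pT (s+1) * NT (s+1) := ⟨3 * NT (s+1), by ring⟩
  have h3 : pT (s+1) ∣ 1 := (Nat.dvd_add_right h2).mp h
  have := hp9T s
  have := Nat.le_of_dvd (by norm_num) h3
  omega

lemma p_not_dvd_C (s : ℕ) : ¬ (pT (s+1) ∣ CT (s+1)) := by
  rw [CT_def]
  intro h
  have hp9 := hp9T s
  have hN2 : 2 ≤ NT (s+1) := by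
    rw [NT_def]
    have h1 := k_pos s _ (le_trans (Nat.unpair_left_le s) (by omega))
    have h2 := k_pos s _ (le_trans (Nat.unpair_right_le s) (by omega))
    omega
  have h3pN2 : 2 ≤ 3 * pT (s+1) * NT (s+1) := by
    have h1 : NT (s+1) ≤ pT (s+1) * NT (s+1) := Nat.le_mul_of_pos_left _ (by omega)
    have h3 : 3*(pT (s+1) * NT (s+1)) = 3 * pT (s+1) * NT (s+1) := by ring
    have h2 : pT (s+1) * NT (s+1) ≤ 3*(pT (s+1) * NT (s+1)) := Nat.le_mul_of_pos_left _ (by norm_num)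
    omega
  have h2 : pT (s+1) ∣ 3 * pT (s+1) * NT (s+1) := ⟨3 * NT (s+1), by ring⟩
  have h3 : pT (s+1) ∣ 3 * pT (s+1) * NT (s+1) - (3 * pT (s+1) * NT (s+1) - 2) :=
    Nat.dvd_sub h2 h
  have heq2 : 3 * pT (s+1) * NT (s+1) - (3 * pT (s+1) * NT (s+1) - 2) = 2 := by omega
  rw [heq2] at h3
  have := Nat.le_of_dvd (by norm_num) h3
  omega

lemma NT_pos (s : ℕ) : 2 ≤ NT (s+1) := by
  rw [NT_def]
  have h1 := k_pos s _ (le_trans (Nat.unpair_left_le s) (by omega))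
  have h2 := k_pos s _ (le_trans (Nat.unpair_right_le s) (by omega))
  omega

lemma C_le_A (s : ℕ) : CT (s+1) ≤ AT (s+1) := by
  rw [AT_def, CT_def]; omega

/-- coefficient bound from the value equation -/
lemma coeff_bound {n : ℕ} {m : ℕ → ℕ} {j : ℕ}
    (heq : ∑ i ∈ Finset.range n, (m i : ℚ) * a i = a j)
    {i : ℕ} (hi : i ∈ Finset.range n) {R : ℕ} (hstg : stg i ≤ R) :
    (m i : ℚ) ≤ (9:ℚ)^R := by
  have hterm : (m i : ℚ) * a i ≤ a j := by
    rw [← heq]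
    apply Finset.single_le_sum (fun k _ => ?_) hi
    have := a_pos k
    positivity
  obtain ⟨hai0, hai1, hai9⟩ := a_facts i
  have h9mono : (9:ℚ)^(stg i) ≤ (9:ℚ)^R := pow_le_pow_right₀ (by norm_num) hstg
  have h1 : (m i : ℚ) ≤ (m i : ℚ) * ((9:ℚ)^(stg i) * a i) := by
    nlinarith [Nat.cast_nonneg (α := ℚ) (m i)]
  have h2 : (m i : ℚ) * ((9:ℚ)^(stg i) * a i) = (9:ℚ)^(stg i) * ((m i : ℚ) * a i) := by ring
  have h3 : (9:ℚ)^(stg i) * ((m i : ℚ) * a i) ≤ (9:ℚ)^(stg i) * a j := by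
    apply mul_le_mul_of_nonneg_left hterm (by positivity)
  have h4 : (9:ℚ)^(stg i) * a j ≤ (9:ℚ)^(stg i) * 1 := by
    apply mul_le_mul_of_nonneg_left (a_le_one j) (by positivity)
  calc (m i : ℚ) ≤ (m i : ℚ) * ((9:ℚ)^(stg i) * a i) := h1
  _ = (9:ℚ)^(stg i) * ((m i : ℚ) * a i) := h2
  _ ≤ (9:ℚ)^(stg i) * a j := h3
  _ ≤ (9:ℚ)^(stg i) * 1 := h4
  _ = (9:ℚ)^(stg i) := mul_one _
  _ ≤ (9:ℚ)^R := h9mono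


lemma sum_nonneg_terms (n : ℕ) (m : ℕ → ℕ) :
    0 ≤ ∑ i ∈ Finset.range n, (m i : ℚ) * a i :=
  Finset.sum_nonneg (fun i _ => by have := a_pos i; positivity)

lemma sum_zero_all {n : ℕ} {m : ℕ → ℕ}
    (h : ∑ i ∈ Finset.range n, (m i : ℚ) * a i = 0) :
    ∀ i, i < n → m i = 0 := by
  intro i hi
  have := (Finset.sum_eq_zero_iff_of_nonneg
      (fun i _ => by have := a_pos i; positivity)).mp h i (Finset.mem_range.mpr hi)
  have hai := a_pos i
  rcases mul_eq_zero.mp this with h0 | h0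
  · exact_mod_cast h0
  · exact absurd h0 (ne_of_gt hai)

lemma indsum {R : ℕ} {i0 : ℕ} (h : i0 ∈ Finset.range R) :
    ∑ i ∈ Finset.range R, ((if i = i0 then (1:ℕ) else 0):ℚ) * a i = a i0 := by
  have hcongr : ∀ i ∈ Finset.range R,
      ((if i = i0 then (1:ℕ) else 0):ℚ) * a i = if i = i0 then a i else 0 := by
    intro i _; split <;> simp
  rw [Finset.sum_congr rfl hcongr, Finset.sum_ite_eq' (Finset.range R) i0 a, if_pos h]

theorem master : ∀ T : ℕ, ∀ j : ℕ, ∀ m : ℕ → ℕ, j ≤ 2*T →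
    (∑ i ∈ Finset.range (2*T+1), (m i : ℚ) * a i) = a j →
    ∀ i, i ≤ 2*T → m i = if i = j then 1 else 0 := by
  intro T
  induction T with
  | zero =>
    intro j m hj heq i hi
    interval_cases j
    interval_cases i
    rw [show 2*0+1 = 1 from rfl, Finset.sum_range_one, a_zero, mul_one] at heq
    norm_num
    exact_mod_cast heq
  | succ T IH =>
    intro j m hj heq0
    have hpprime : (pT (T+1)).Prime := (pT_spec T).2
    haveI : Fact (pT (T+1)).Prime := ⟨hpprime⟩
    have hxidx : 2*(T+1)-1 = 2*T+1 := by omega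
    have hzidx : 2*(T+1) = 2*T+1+1 := by omega
    have hrangeEq : 2*(T+1)+1 = (2*T+1+1)+1 := by ring
    -- split equation
    have heq : (∑ i ∈ Finset.range (2*T+1), (m i : ℚ) * a i)
        + (m (2*T+1) : ℚ) * a (2*T+1) + (m (2*T+1+1) : ℚ) * a (2*T+1+1) = a j := by
      have h := heq0
      rw [hrangeEq, Finset.sum_range_succ, Finset.sum_range_succ] at h
      exact h
    -- the ℕ equation
    have hNat : (∑ i ∈ Finset.range (2*(T+1)+1), m i * (S (T+1)).k i)
        = (S (T+1)).k j := by
      have hq : ((∑ i ∈ Finset.range (2*(T+1)+1), m i * (S (T+1)).k i : ℕ) : ℚ)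
          = (((S (T+1)).k j : ℕ) : ℚ) := by
        push_cast
        calc ∑ i ∈ Finset.range (2*(T+1)+1), (m i:ℚ) * ((S (T+1)).k i : ℚ)
            = ∑ i ∈ Finset.range (2*(T+1)+1), (m i:ℚ) * (a i * (((S (T+1)).Q : ℕ) : ℚ)) := by
              refine Finset.sum_congr rfl (fun i hi => ?_)
              rw [a_kEq (T+1) i (by have := Finset.mem_range.mp hi; omega)]
        _ = (∑ i ∈ Finset.range (2*(T+1)+1), (m i:ℚ) * a i) * (((S (T+1)).Q : ℕ) : ℚ) := by
              rw [Finset.sum_mul]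
              refine Finset.sum_congr rfl (fun i _ => by ring)
        _ = a j * (((S (T+1)).Q : ℕ) : ℚ) := by rw [heq0]
        _ = (((S (T+1)).k j : ℕ) : ℚ) := a_kEq (T+1) j (by omega)
      exact_mod_cast hq
    -- split the ℕ equation
    have hNat2 : (∑ i ∈ Finset.range (2*T+1), m i * (S (T+1)).k i)
        + m (2*T+1) * (S (T+1)).k (2*T+1) + m (2*T+1+1) * (S (T+1)).k (2*T+1+1)
        = (S (T+1)).k j := by
      have h := hNat
      rw [hrangeEq, Finset.sum_range_succ, Finset.sum_range_succ] at h
      exact h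
    -- k values at the new indices
    have hKx : (S (T+1)).k (2*T+1) = AT (T+1) * (S T).Q := by
      rw [← hxidx]; exact Sk_x T
    have hKz : (S (T+1)).k (2*T+1+1) = CT (T+1) * (S T).Q := by
      rw [← hzidx]; exact Sk_z T
    -- ZMod p computation
    have hlowdvd : pT (T+1) ∣ (∑ i ∈ Finset.range (2*T+1), m i * (S (T+1)).k i) := by
      refine Finset.dvd_sum (fun i hi => ?_)
      exact Dvd.dvd.mul_left (k_dvd_old T i (by have := Finset.mem_range.mp hi; omega)) _
    have hN2 := NT_pos T
    have hp9 := hp9T T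
    have h3pN2 : 2 ≤ 3 * pT (T+1) * NT (T+1) := by
      have h1 : NT (T+1) ≤ pT (T+1) * NT (T+1) := Nat.le_mul_of_pos_left _ (by omega)
      have h3 : 3*(pT (T+1) * NT (T+1)) = 3 * pT (T+1) * NT (T+1) := by ring
      have h2 : pT (T+1) * NT (T+1) ≤ 3*(pT (T+1) * NT (T+1)) :=
        Nat.le_mul_of_pos_left _ (by norm_num)
      omega
    have hAz : ((AT (T+1) : ℕ) : ZMod (pT (T+1))) = 1 := by
      rw [AT_def]
      push_cast
      rw [ZMod.natCast_self]
      ring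
    have hCz : ((CT (T+1) : ℕ) : ZMod (pT (T+1))) = -2 := by
      have hCT2 : CT (T+1) + 2 = 3 * pT (T+1) * NT (T+1) := by
        rw [CT_def]; omega
      have := congrArg (fun n : ℕ => (n : ZMod (pT (T+1)))) hCT2
      push_cast at this
      rw [ZMod.natCast_self] at this
      linear_combination this
    have hQz : ((S T).Q : ZMod (pT (T+1))) ≠ 0 := by
      rw [Ne, CharP.cast_eq_zero_iff (ZMod (pT (T+1))) (pT (T+1))]
      exact p_not_dvd_Q T
    -- main congruence
    have hcong : ((m (2*T+1) : ZMod (pT (T+1))) - 2 * (m (2*T+1+1) : ZMod (pT (T+1))))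
        * ((S T).Q : ZMod (pT (T+1)))
        = ((S (T+1)).k j : ZMod (pT (T+1))) := by
      have := congrArg (fun n : ℕ => (n : ZMod (pT (T+1)))) hNat2
      simp only [Nat.cast_add, Nat.cast_mul] at this
      rw [(CharP.cast_eq_zero_iff (ZMod (pT (T+1))) (pT (T+1)) _).mpr hlowdvd] at this
      rw [hKx, hKz] at this
      push_cast at this
      rw [hAz, hCz] at this
      linear_combination this
    -- coefficient bounds
    have hmx9 : m (2*T+1) ≤ 9^(T+1) := by
      have h := coeff_bound (n := 2*(T+1)+1) (m := m) (j := j) heq0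
        (i := 2*T+1) (Finset.mem_range.mpr (by omega)) (R := T+1) (by unfold stg; omega)
      have h2 : ((9^(T+1) : ℕ) : ℚ) = (9:ℚ)^(T+1) := by push_cast; ring
      rw [← h2] at h
      exact_mod_cast h
    have hmz9 : m (2*T+1+1) ≤ 9^(T+1) := by
      have h := coeff_bound (n := 2*(T+1)+1) (m := m) (j := j) heq0
        (i := 2*T+1+1) (Finset.mem_range.mpr (by omega)) (R := T+1) (by unfold stg; omega)
      have h2 : ((9^(T+1) : ℕ) : ℚ) = (9:ℚ)^(T+1) := by push_cast; ring
      rw [← h2] at h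
      exact_mod_cast h
    have hpbig : 3 * 9^(T+1) + 3 ≤ pT (T+1) := by
      have h1 := (pT_spec T).1
      have h2 : (9:ℕ)^(T+2) = 9 * 9^(T+1) := by rw [pow_succ]; ring
      have h3 : 1 ≤ (9:ℕ)^(T+1) := Nat.one_le_pow _ _ (by norm_num)
      omega
    -- the relation 2x + z = u + v
    have hrel : a ((Nat.unpair T).1) + a ((Nat.unpair T).2)
        = 2 * a (2*T+1) + a (2*T+1+1) := by
      have := pair_relation T
      rwa [hxidx, hzidx] at this
    have hi0le : (Nat.unpair T).1 ≤ 2*T := le_trans (Nat.unpair_left_le T) (by omega)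
    have hj0le : (Nat.unpair T).2 ≤ 2*T := le_trans (Nat.unpair_right_le T) (by omega)
    have huvpos : 0 < a ((Nat.unpair T).1) + a ((Nat.unpair T).2) := by
      have := a_pos ((Nat.unpair T).1); have := a_pos ((Nat.unpair T).2); linarith
    -- derive the integer equation m_x - 2 m_z = slot
    -- case analysis on j
    rcases (by omega : j = 2*T+1 ∨ j = 2*T+1+1 ∨ j ≤ 2*T) with hj1 | hj2 | hj3
    · -- j = 2T+1 : the x-atom case
      subst hj1
      have hkj : ((S (T+1)).k (2*T+1) : ZMod (pT (T+1)))
          = ((S T).Q : ZMod (pT (T+1))) := by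
        rw [hKx]; push_cast; rw [hAz]; ring
      rw [hkj] at hcong
      have hfac : (((m (2*T+1) : ZMod (pT (T+1))) - 2 * (m (2*T+1+1) : ZMod (pT (T+1)))) - 1)
          * ((S T).Q : ZMod (pT (T+1))) = 0 := by
        linear_combination hcong
      have hz0 : ((m (2*T+1) : ZMod (pT (T+1))) - 2 * (m (2*T+1+1) : ZMod (pT (T+1)))) - 1 = 0 :=
        by
        rcases mul_eq_zero.mp hfac with h | h
        · exact h
        · exact absurd h hQz
      have hdint : ((m (2*T+1) : ℤ) - 2 * (m (2*T+1+1) : ℤ) - 1 : ℤ) = 0 := by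
        have : (((m (2*T+1) : ℤ) - 2 * (m (2*T+1+1) : ℤ) - 1 : ℤ) : ZMod (pT (T+1))) = 0 := by
          push_cast
          linear_combination hz0
        have hdvd := (CharP.intCast_eq_zero_iff (ZMod (pT (T+1))) (pT (T+1)) _).mp this
        refine Int.eq_zero_of_abs_lt_dvd hdvd ?_
        have hb1 : (m (2*T+1) : ℤ) ≤ (9:ℤ)^(T+1) := by exact_mod_cast hmx9
        have hb2 : (m (2*T+1+1) : ℤ) ≤ (9:ℤ)^(T+1) := by exact_mod_cast hmz9
        have hb3 : (3:ℤ) * 9^(T+1) + 3 ≤ (pT (T+1) : ℤ) := by exact_mod_cast hpbig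
        have hb4 : (0:ℤ) ≤ (m (2*T+1) : ℤ) := Int.natCast_nonneg _
        have hb5 : (0:ℤ) ≤ (m (2*T+1+1) : ℤ) := Int.natCast_nonneg _
        rw [abs_lt]
        omega
      have hmx : m (2*T+1) = 2 * m (2*T+1+1) + 1 := by omega
      -- value equation: lowSum + m_z * (2x+z) = 0
      have hval : (∑ i ∈ Finset.range (2*T+1), (m i : ℚ) * a i)
          + (m (2*T+1+1) : ℚ) * (a ((Nat.unpair T).1) + a ((Nat.unpair T).2)) = 0 := by
        rw [hrel]
        rw [hmx] at heq
        push_cast at heq ⊢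
        linarith [heq]
      have hlow0 : (∑ i ∈ Finset.range (2*T+1), (m i : ℚ) * a i) = 0 := by
        have h1 := sum_nonneg_terms (2*T+1) m
        have h2 : (0:ℚ) ≤ (m (2*T+1+1) : ℚ) * (a ((Nat.unpair T).1) + a ((Nat.unpair T).2)) := by
          positivity
        linarith
      have hmz0 : m (2*T+1+1) = 0 := by
        have h2 : (m (2*T+1+1) : ℚ) * (a ((Nat.unpair T).1) + a ((Nat.unpair T).2)) = 0 := by
          linarith [hval, hlow0]
        rcases mul_eq_zero.mp h2 with h | h
        · exact_mod_cast h
        · exact absurd h (ne_of_gt huvpos)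
      have hlowall := sum_zero_all hlow0
      intro i hi2
      rcases (by omega : i ≤ 2*T ∨ i = 2*T+1 ∨ i = 2*T+1+1) with h | h | h
      · rw [hlowall i (by omega), if_neg (by omega)]
      · subst h; rw [if_pos rfl]; omega
      · subst h; rw [if_neg (by omega)]; exact hmz0
    · -- j = 2T+2 : the z-atom case
      subst hj2
      have hkj : ((S (T+1)).k (2*T+1+1) : ZMod (pT (T+1)))
          = -2 * ((S T).Q : ZMod (pT (T+1))) := by
        rw [hKz]; push_cast; rw [hCz]
      rw [hkj] at hcong
      have hfac : (((m (2*T+1) : ZMod (pT (T+1))) - 2 * (m (2*T+1+1) : ZMod (pT (T+1)))) + 2)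
          * ((S T).Q : ZMod (pT (T+1))) = 0 := by
        linear_combination hcong
      have hz0 : ((m (2*T+1) : ZMod (pT (T+1))) - 2 * (m (2*T+1+1) : ZMod (pT (T+1)))) + 2 = 0 :=
        by
        rcases mul_eq_zero.mp hfac with h | h
        · exact h
        · exact absurd h hQz
      have hdint : ((m (2*T+1) : ℤ) - 2 * (m (2*T+1+1) : ℤ) + 2 : ℤ) = 0 := by
        have : (((m (2*T+1) : ℤ) - 2 * (m (2*T+1+1) : ℤ) + 2 : ℤ) : ZMod (pT (T+1))) = 0 := by
          push_cast
          linear_combination hz0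
        have hdvd := (CharP.intCast_eq_zero_iff (ZMod (pT (T+1))) (pT (T+1)) _).mp this
        refine Int.eq_zero_of_abs_lt_dvd hdvd ?_
        have hb1 : (m (2*T+1) : ℤ) ≤ (9:ℤ)^(T+1) := by exact_mod_cast hmx9
        have hb2 : (m (2*T+1+1) : ℤ) ≤ (9:ℤ)^(T+1) := by exact_mod_cast hmz9
        have hb3 : (3:ℤ) * 9^(T+1) + 3 ≤ (pT (T+1) : ℤ) := by exact_mod_cast hpbig
        have hb4 : (0:ℤ) ≤ (m (2*T+1) : ℤ) := Int.natCast_nonneg _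
        have hb5 : (0:ℤ) ≤ (m (2*T+1+1) : ℤ) := Int.natCast_nonneg _
        rw [abs_lt]
        omega
      have hmz1 : 1 ≤ m (2*T+1+1) := by omega
      have hmx : m (2*T+1) = 2 * (m (2*T+1+1) - 1) := by omega
      have hval : (∑ i ∈ Finset.range (2*T+1), (m i : ℚ) * a i)
          + ((m (2*T+1+1) - 1 : ℕ) : ℚ) * (a ((Nat.unpair T).1) + a ((Nat.unpair T).2)) = 0 := by
        rw [hrel]
        rw [hmx] at heq
        have hc : ((2 * (m (2*T+1+1) - 1) : ℕ) : ℚ) = 2 * ((m (2*T+1+1) - 1 : ℕ) : ℚ) := by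
          push_cast; ring
        rw [hc] at heq
        have hc2 : ((m (2*T+1+1)) : ℚ) = ((m (2*T+1+1) - 1 : ℕ) : ℚ) + 1 := by
          have : m (2*T+1+1) = (m (2*T+1+1) - 1) + 1 := by omega
          rw [this]; push_cast; ring
        rw [hc2] at heq
        linarith [heq]
      have hlow0 : (∑ i ∈ Finset.range (2*T+1), (m i : ℚ) * a i) = 0 := by
        have h1 := sum_nonneg_terms (2*T+1) m
        have h2 : (0:ℚ) ≤ ((m (2*T+1+1) - 1 : ℕ) : ℚ)
            * (a ((Nat.unpair T).1) + a ((Nat.unpair T).2)) := by positivity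
        linarith
      have hmzval : m (2*T+1+1) = 1 := by
        have h2 : ((m (2*T+1+1) - 1 : ℕ) : ℚ)
            * (a ((Nat.unpair T).1) + a ((Nat.unpair T).2)) = 0 := by
          linarith [hval, hlow0]
        rcases mul_eq_zero.mp h2 with h | h
        · have : m (2*T+1+1) - 1 = 0 := by exact_mod_cast h
          omega
        · exact absurd h (ne_of_gt huvpos)
      have hlowall := sum_zero_all hlow0
      intro i hi2
      rcases (by omega : i ≤ 2*T ∨ i = 2*T+1 ∨ i = 2*T+1+1) with h | h | h
      · rw [hlowall i (by omega), if_neg (by omega)]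
      · subst h; rw [if_neg (by omega)]; omega
      · subst h; rw [if_pos rfl]; exact hmzval
    · -- j ≤ 2T : recursive case
      have hkjdvd : pT (T+1) ∣ (S (T+1)).k j := k_dvd_old T j hj3
      have hkj : ((S (T+1)).k j : ZMod (pT (T+1))) = 0 :=
        (CharP.cast_eq_zero_iff (ZMod (pT (T+1))) (pT (T+1)) _).mpr hkjdvd
      rw [hkj] at hcong
      have hz0 : ((m (2*T+1) : ZMod (pT (T+1))) - 2 * (m (2*T+1+1) : ZMod (pT (T+1)))) = 0 := by
        rcases mul_eq_zero.mp hcong with h | h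
        · exact h
        · exact absurd h hQz
      have hdint : ((m (2*T+1) : ℤ) - 2 * (m (2*T+1+1) : ℤ) : ℤ) = 0 := by
        have : (((m (2*T+1) : ℤ) - 2 * (m (2*T+1+1) : ℤ) : ℤ) : ZMod (pT (T+1))) = 0 := by
          push_cast
          linear_combination hz0
        have hdvd := (CharP.intCast_eq_zero_iff (ZMod (pT (T+1))) (pT (T+1)) _).mp this
        refine Int.eq_zero_of_abs_lt_dvd hdvd ?_
        have hb1 : (m (2*T+1) : ℤ) ≤ (9:ℤ)^(T+1) := by exact_mod_cast hmx9
        have hb2 : (m (2*T+1+1) : ℤ) ≤ (9:ℤ)^(T+1) := by exact_mod_cast hmz9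
        have hb3 : (3:ℤ) * 9^(T+1) + 3 ≤ (pT (T+1) : ℤ) := by exact_mod_cast hpbig
        have hb4 : (0:ℤ) ≤ (m (2*T+1) : ℤ) := Int.natCast_nonneg _
        have hb5 : (0:ℤ) ≤ (m (2*T+1+1) : ℤ) := Int.natCast_nonneg _
        rw [abs_lt]
        omega
      have hmx : m (2*T+1) = 2 * m (2*T+1+1) := by omega
      -- build m' and apply IH
      set t' := m (2*T+1+1) with ht'
      have hm'eq : (∑ i ∈ Finset.range (2*T+1),
          ((m i + t' * ((if i = (Nat.unpair T).1 then 1 else 0)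
            + (if i = (Nat.unpair T).2 then 1 else 0)) : ℕ) : ℚ) * a i) = a j := by
        have hexp : ∀ i ∈ Finset.range (2*T+1),
            ((m i + t' * ((if i = (Nat.unpair T).1 then 1 else 0)
              + (if i = (Nat.unpair T).2 then 1 else 0)) : ℕ) : ℚ) * a i
            = (m i : ℚ) * a i
              + (t' : ℚ) * (((if i = (Nat.unpair T).1 then (1:ℕ) else 0) : ℚ) * a i)
              + (t' : ℚ) * (((if i = (Nat.unpair T).2 then (1:ℕ) else 0) : ℚ) * a i) := by
          intro i _
          push_cast
          ring
        rw [Finset.sum_congr rfl hexp]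
        rw [Finset.sum_add_distrib, Finset.sum_add_distrib, ← Finset.mul_sum, ← Finset.mul_sum]
        rw [indsum (Finset.mem_range.mpr (by omega)),
            indsum (Finset.mem_range.mpr (by omega))]
        -- now: lowSum + t' * a i0 + t' * a j0 = a j
        rw [hmx] at heq
        have : (∑ i ∈ Finset.range (2*T+1), (m i : ℚ) * a i)
            + (t' : ℚ) * (a ((Nat.unpair T).1) + a ((Nat.unpair T).2)) = a j := by
          rw [hrel]
          push_cast at heq ⊢
          linarith [heq]
        linarith [this]
      have hIH := IH j (fun i => m i + t' * ((if i = (Nat.unpair T).1 then 1 else 0)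
            + (if i = (Nat.unpair T).2 then 1 else 0))) hj3 hm'eq
      -- t' must be 0
      have ht'0 : t' = 0 := by
        by_contra ht'ne
        have ht'1 : 1 ≤ t' := by omega
        have h1 := hIH ((Nat.unpair T).1) hi0le
        have h2 := hIH ((Nat.unpair T).2) hj0le
        simp only [eq_self_iff_true, if_true] at h1 h2
        rcases eq_or_ne ((Nat.unpair T).1) ((Nat.unpair T).2) with hee | hne
        · rw [if_pos hee] at h1
          rcases eq_or_ne ((Nat.unpair T).1) j with hij | hij
          · rw [if_pos hij] at h1; omega
          · rw [if_neg hij] at h1; omega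
        · rw [if_neg hne] at h1
          rw [if_neg (Ne.symm hne)] at h2
          rcases eq_or_ne ((Nat.unpair T).1) j with hij | hij
          · rcases eq_or_ne ((Nat.unpair T).2) j with hij2 | hij2
            · exact hne (hij.trans hij2.symm)
            · rw [if_pos hij] at h1
              rw [if_neg hij2] at h2
              omega
          · rw [if_neg hij] at h1; omega
      intro i hi2
      rcases (by omega : i ≤ 2*T ∨ i = 2*T+1 ∨ i = 2*T+1+1) with h | h | h
      · have h1 := hIH i h
        rw [ht'0] at h1
        simpa using h1
      · subst h; rw [if_neg (by omega)]; omega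
      · subst h; rw [if_neg (by omega)]; omega


lemma multiset_count_sum (il : Multiset ℕ) (R : ℕ) (hR : ∀ i ∈ il, i < R) :
    ∑ i ∈ Finset.range R, ((il.count i : ℕ):ℚ) * a i = (il.map a).sum := by
  induction il using Multiset.induction_on with
  | empty => simp
  | cons b s ih =>
    have hb : b < R := hR b (Multiset.mem_cons_self b s)
    have hR' : ∀ i ∈ s, i < R := fun i hi => hR i (Multiset.mem_cons_of_mem hi)
    rw [Multiset.map_cons, Multiset.sum_cons, ← ih hR']
    have hcongr : ∀ i ∈ Finset.range R, (((b ::ₘ s).count i : ℕ):ℚ) * a i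
        = ((s.count i : ℕ):ℚ) * a i + ((if i = b then (1:ℕ) else 0):ℚ) * a i := by
      intro i _
      rw [Multiset.count_cons]
      push_cast
      ring
    rw [Finset.sum_congr rfl hcongr, Finset.sum_add_distrib,
        indsum (Finset.mem_range.mpr hb)]
    ring

theorem atom_unique_factorization (j : ℕ) (il : Multiset ℕ)
    (hsum : (il.map a).sum = a j) : il = {j} := by
  have hmem : ∀ i ∈ il, i ≤ il.sum := fun i hi =>
    Multiset.single_le_sum (fun x _ => Nat.zero_le x) i hi
  have hcount := master (il.sum + j + 1) j (fun i => il.count i) (by omega) (by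
    rw [multiset_count_sum il (2*(il.sum + j + 1)+1) (fun i hi => by
      have := hmem i hi; omega)]
    exact hsum)
  ext b
  rw [Multiset.count_singleton]
  rcases le_or_gt b (2*(il.sum + j + 1)) with hb | hb
  · exact hcount b hb
  · have hbnotin : b ∉ il := fun hin => by have := hmem b hin; omega
    rw [Multiset.count_eq_zero_of_notMem hbnotin, if_neg (by omega)]

noncomputable def WM : AddSubmonoid ℚ := AddSubmonoid.closure (Set.range a)

lemma range_to_index (l : Multiset ℚ) (hl : ∀ y ∈ l, y ∈ Set.range a) :
    ∃ il : Multiset ℕ, il.map a = l := by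
  induction l using Multiset.induction_on with
  | empty => exact ⟨0, rfl⟩
  | cons b s ih =>
    obtain ⟨j, hj⟩ := hl b (Multiset.mem_cons_self b s)
    obtain ⟨il, hil⟩ := ih (fun y hy => hl y (Multiset.mem_cons_of_mem hy))
    exact ⟨j ::ₘ il, by rw [Multiset.map_cons, hil, hj]⟩

lemma mem_WM_iff {x : ℚ} : x ∈ WM ↔ ∃ il : Multiset ℕ, (il.map a).sum = x := by
  constructor
  · intro hx
    obtain ⟨l, hl, hsum⟩ := AddSubmonoid.exists_multiset_of_mem_closure hx
    obtain ⟨il, hil⟩ := range_to_index l hl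
    exact ⟨il, by rw [hil, hsum]⟩
  · rintro ⟨il, rfl⟩
    induction il using Multiset.induction_on with
    | empty => simpa using WM.zero_mem
    | cons b s ih =>
      rw [Multiset.map_cons, Multiset.sum_cons]
      exact WM.add_mem (AddSubmonoid.subset_closure ⟨b, rfl⟩) ih

lemma a_mem_WM (j : ℕ) : a j ∈ WM := AddSubmonoid.subset_closure ⟨j, rfl⟩

lemma map_sum_zero {il : Multiset ℕ} (h : (il.map a).sum = 0) : il = 0 := by
  by_contra hne
  obtain ⟨b, hb⟩ := Multiset.exists_mem_of_ne_zero hne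
  have hble : a b ≤ (il.map a).sum :=
    Multiset.single_le_sum (fun y hy => by
      obtain ⟨i, _, rfl⟩ := Multiset.mem_map.mp hy
      exact (a_pos i).le) _ (Multiset.mem_map_of_mem a hb)
  have := a_pos b
  rw [h] at hble
  linarith

lemma isAtom_a (j : ℕ) : IsAtomOf WM (a j) := by
  refine ⟨a_mem_WM j, ne_of_gt (a_pos j), ?_⟩
  rintro u v hu hv huv
  obtain ⟨lu, hlu⟩ := mem_WM_iff.mp hu
  obtain ⟨lv, hlv⟩ := mem_WM_iff.mp hv
  have htot : ((lu + lv).map a).sum = a j := by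
    rw [Multiset.map_add, Multiset.sum_add, hlu, hlv, ← huv]
  have h1 := atom_unique_factorization j _ htot
  have hcard : Multiset.card lu + Multiset.card lv = 1 := by
    have := congrArg Multiset.card h1
    rwa [Multiset.card_add, Multiset.card_singleton] at this
  rcases (by omega : Multiset.card lu = 0 ∨ Multiset.card lv = 0) with h | h
  · left
    rw [Multiset.card_eq_zero] at h
    rw [← hlu, h]; simp
  · right
    rw [Multiset.card_eq_zero] at h
    rw [← hlv, h]; simp

lemma WM_puiseux : IsPuiseux WM := by
  intro x hx
  obtain ⟨il, rfl⟩ := mem_WM_iff.mp hx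
  apply Multiset.sum_nonneg
  intro y hy
  obtain ⟨i, _, rfl⟩ := Multiset.mem_map.mp hy
  exact (a_pos i).le

lemma WM_ne_bot : WM ≠ ⊥ := by
  intro h
  have h1 : a 0 ∈ WM := a_mem_WM 0
  rw [h, AddSubmonoid.mem_bot, a_zero] at h1
  norm_num at h1

lemma WM_atomic : AtomicM WM := by
  intro x hx hx0
  obtain ⟨il, rfl⟩ := mem_WM_iff.mp hx
  refine ⟨il.toList.length, fun i => a (il.toList.get i), fun i => isAtom_a _, ?_⟩
  have h1 : ∑ i : Fin il.toList.length, a (il.toList.get i)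
      = (List.ofFn (fun i => a (il.toList.get i))).sum := List.sum_ofFn.symm
  have h2 : List.ofFn (fun i => a (il.toList.get i)) = il.toList.map a := by
    rw [← List.ofFn_get (il.toList.map a)]
    simp [List.getElem_map]
  have h3 : (il.toList.map a).sum = (il.map a).sum := by
    rw [← Multiset.coe_toList il, Multiset.map_coe, Multiset.sum_coe]
    simp
  rw [h1, h2, h3]

lemma atom_of_WM {b : ℚ} (hb : IsAtomOf WM b) : ∃ j, b = a j := by
  obtain ⟨hbW, hb0, hmin⟩ := hb
  obtain ⟨il, hil⟩ := mem_WM_iff.mp hbW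
  have hne : il ≠ 0 := by
    intro h; rw [h] at hil; simp at hil; exact hb0 hil.symm
  obtain ⟨j, hj⟩ := Multiset.exists_mem_of_ne_zero hne
  obtain ⟨s, rfl⟩ := Multiset.exists_cons_of_mem hj
  rw [Multiset.map_cons, Multiset.sum_cons] at hil
  have hrest : (s.map a).sum ∈ WM := mem_WM_iff.mpr ⟨s, rfl⟩
  rcases hmin (a j) ((s.map a).sum) (a_mem_WM j) hrest hil.symm with h | h
  · exact absurd h (ne_of_gt (a_pos j))
  · rw [map_sum_zero h] at hil
    simp at hil
    exact ⟨j, hil.symm⟩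

theorem WM_no_two (x : ℚ) : lengthsOf WM x ≠ {2} := by
  intro h
  have h2 : (2:ℕ) ∈ lengthsOf WM x := by rw [h]; rfl
  obtain ⟨f, hf, hsum⟩ := h2
  obtain ⟨i1, hi1⟩ := atom_of_WM (hf 0)
  obtain ⟨i2, hi2⟩ := atom_of_WM (hf 1)
  have hx2 : x = a i1 + a i2 := by rw [hsum, Fin.sum_univ_two, hi1, hi2]
  have hrel := pair_relation (Nat.pair i1 i2)
  rw [Nat.unpair_pair] at hrel
  have h3 : (3:ℕ) ∈ lengthsOf WM x := by
    refine ⟨![a (2*(Nat.pair i1 i2+1)-1), a (2*(Nat.pair i1 i2+1)-1),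
        a (2*(Nat.pair i1 i2+1))], fun i => ?_, ?_⟩
    · fin_cases i <;> exact isAtom_a _
    · rw [hx2, Fin.sum_univ_three]
      show a i1 + a i2 = a (2*(Nat.pair i1 i2+1)-1) + a (2*(Nat.pair i1 i2+1)-1)
        + a (2*(Nat.pair i1 i2+1))
      rw [hrel]; ring
  rw [h] at h3
  simp only [Set.mem_singleton_iff] at h3
  omega

end W
end SSL


/-- The intersection of the systems of sets of lengths over all nontrivial
atomic Puiseux monoids equals `{{0}, {1}}`. -/
theorem stmt9 :
    {S : Set ℕ | ∀ M : AddSubmonoid ℚ, IsPuiseux M → M ≠ ⊥ → AtomicM M →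
        S ∈ systemOfLengths M} = {{0}, {1}} := by
  ext S
  simp only [Set.mem_setOf_eq, Set.mem_insert_iff, Set.mem_singleton_iff]
  constructor
  · intro h
    obtain ⟨n, rfl⟩ := SSL.NM_system (h SSL.NM SSL.NM_puiseux SSL.NM_ne_bot SSL.NM_atomic)
    have h2 := h SSL.W.WM SSL.W.WM_puiseux SSL.W.WM_ne_bot SSL.W.WM_atomic
    have hn2 : n ≠ 2 := by
      rintro rfl
      rcases h2 with ⟨x, hx, hlen⟩
      exact SSL.W.WM_no_two x hlen
    have h3 := h SSL.IM SSL.IM_puiseux SSL.IM_ne_bot SSL.IM_atomic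
    rcases h3 with ⟨x, hx, hlen⟩
    have hn3 : ¬ 3 ≤ n := fun hge => SSL.IM_no_singleton hge hx hlen
    have hn : n ≤ 2 := by omega
    interval_cases n
    · left; rfl
    · right; rfl
    · exact absurd rfl hn2
  · rintro (rfl | rfl)
    · intro M hP _ _; exact SSL.zero_mem_system hP
    · intro M hP hbot hat; exact SSL.one_mem_system hP hbot hat
end

section
/- There exist two non-isomorphic non-finitely generated atomic Puiseux monoids with the same system of sets of lengths. -/
open scoped BigOperators

def DyadicQ (x : ℚ) : Prop := ∃ (a : ℤ) (n : ℕ), x * 2 ^ n = a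

lemma dy_zero : DyadicQ 0 := ⟨0, 0, by norm_num⟩
lemma dy_one : DyadicQ 1 := ⟨1, 0, by norm_num⟩
lemma dy_half : DyadicQ (1/2) := ⟨1, 1, by norm_num⟩
lemma dy_add {x y : ℚ} (hx : DyadicQ x) (hy : DyadicQ y) : DyadicQ (x + y) := by
  obtain ⟨a, n, ha⟩ := hx
  obtain ⟨b, m, hb⟩ := hy
  refine ⟨a * 2 ^ m + b * 2 ^ n, n + m, ?_⟩
  push_cast
  rw [pow_add]
  linear_combination (2:ℚ) ^ m * ha + (2:ℚ) ^ n * hb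
lemma dy_sub {x y : ℚ} (hx : DyadicQ x) (hy : DyadicQ y) : DyadicQ (x - y) := by
  obtain ⟨a, n, ha⟩ := hx
  obtain ⟨b, m, hb⟩ := hy
  refine ⟨a * 2 ^ m - b * 2 ^ n, n + m, ?_⟩
  push_cast
  rw [pow_add]
  linear_combination (2:ℚ) ^ m * ha - (2:ℚ) ^ n * hb
lemma dy_div2 {x : ℚ} (hx : DyadicQ x) : DyadicQ (x / 2) := by
  obtain ⟨a, n, ha⟩ := hx
  exact ⟨a, n + 1, by rw [pow_succ]; linear_combination ha⟩
lemma dy_nat (k : ℕ) : DyadicQ (k : ℚ) := ⟨k, 0, by norm_num⟩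

section PM

variable (P : ℚ → Prop)

def PMon (hP0 : P 0) (hPadd : ∀ x y, P x → P y → P (x + y)) : AddSubmonoid ℚ where
  carrier := {x | P x ∧ (x = 0 ∨ ∃ k : ℕ, 0 < k ∧ (k : ℚ) < x ∧ 2 * x ≤ 3 * k)}
  zero_mem' := ⟨hP0, Or.inl rfl⟩
  add_mem' := by
    rintro x y ⟨hPx, hx⟩ ⟨hPy, hy⟩
    refine ⟨hPadd _ _ hPx hPy, ?_⟩
    rcases hx with rfl | ⟨k, hk, hk1, hk2⟩
    · simpa using hy
    rcases hy with rfl | ⟨l, hl, hl1, hl2⟩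
    · exact Or.inr ⟨k, hk, by simpa using hk1, by simpa using hk2⟩
    · refine Or.inr ⟨k + l, by omega, by push_cast; linarith, by push_cast; linarith⟩

variable (hP0 : P 0) (hPadd : ∀ x y, P x → P y → P (x + y))

lemma mem_PMon {x : ℚ} :
    x ∈ PMon P hP0 hPadd ↔ P x ∧ (x = 0 ∨ ∃ k : ℕ, 0 < k ∧ (k : ℚ) < x ∧ 2 * x ≤ 3 * k) :=
  Iff.rfl

lemma split (hPdiv : ∀ x, P x → P (x / 2)) (hPsub : ∀ x y, P x → P y → P (x - y))
    (hPhalf : P (1/2)) :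
    ∀ k : ℕ, 0 < k → ∀ e : ℚ, P e → 0 < e → 2 * e ≤ (k : ℚ) →
    ∃ f : Fin k → ℚ, (∀ i, P (f i) ∧ 0 < f i ∧ 2 * f i ≤ 1) ∧ ∑ i, f i = e := by
  intro k
  induction k with
  | zero => intro h; omega
  | succ n ih =>
    intro _ e hPe he0 he1
    rcases Nat.eq_zero_or_pos n with rfl | hn
    · refine ⟨fun _ => e, fun i => ⟨hPe, he0, ?_⟩, by simp⟩
      · push_cast at he1; linarith
    · have hn1 : (1:ℚ) ≤ (n:ℚ) := by exact_mod_cast hn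
      rcases le_or_gt (2 * e) 1 with h | h
      · obtain ⟨f, hf, hsum⟩ := ih hn (e / 2) (hPdiv _ hPe) (by positivity) (by linarith)
        refine ⟨Fin.cons (e/2) f, ?_, by rw [Fin.sum_cons, hsum]; ring⟩
        intro i
        refine Fin.cases ?_ (fun j => ?_) i
        · refine ⟨hPdiv _ hPe, ?_, ?_⟩ <;> simp only [Fin.cons_zero] <;> [positivity; linarith]
        · simpa using hf j
      · obtain ⟨f, hf, hsum⟩ := ih hn (e - 1/2) (hPsub _ _ hPe hPhalf) (by linarith)
          (by push_cast at he1 ⊢; linarith)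
        refine ⟨Fin.cons (1/2) f, ?_, by rw [Fin.sum_cons, hsum]; ring⟩
        intro i
        refine Fin.cases ?_ (fun j => ?_) i
        · exact ⟨hPhalf, by norm_num, by norm_num⟩
        · simpa using hf j

end PM

section PM2

variable (P : ℚ → Prop)
variable (hP0 : P 0) (hP1 : P 1) (hPhalf : P (1/2))
variable (hPadd : ∀ x y, P x → P y → P (x + y))
variable (hPsub : ∀ x y, P x → P y → P (x - y))
variable (hPdiv : ∀ x, P x → P (x / 2))

-- every nonzero member exceeds 1
lemma PMon_pos {x : ℚ} (hx : x ∈ PMon P hP0 hPadd) (hx0 : x ≠ 0) : 1 < x := by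
  rcases hx.2 with rfl | ⟨k, hk, hk1, hk2⟩
  · exact absurd rfl hx0
  · have : (1:ℚ) ≤ (k:ℚ) := by exact_mod_cast hk
    linarith

lemma PMon_nonneg {x : ℚ} (hx : x ∈ PMon P hP0 hPadd) : 0 ≤ x := by
  rcases eq_or_ne x 0 with rfl | h
  · exact le_rfl
  · linarith [PMon_pos P hP0 hPadd hx h]

include hP1 hPhalf hPsub hPdiv in
lemma atom_iff {a : ℚ} :
    IsAtomOf (PMon P hP0 hPadd) a ↔ P a ∧ 1 < a ∧ 2 * a ≤ 3 := by
  constructor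
  · rintro ⟨ha, hne, hmin⟩
    rcases ha.2 with rfl | ⟨k, hk, hk1, hk2⟩
    · exact absurd rfl hne
    rcases Nat.lt_or_ge k 2 with hk2' | hk2'
    · have : k = 1 := by omega
      subst this
      push_cast at hk1 hk2
      exact ⟨ha.1, by linarith, by linarith⟩
    · exfalso
      -- k ≥ 2 : decompose a = u + v with u, v nonzero members
      obtain ⟨k', rfl⟩ : ∃ k', k = k' + 1 := ⟨k - 1, by omega⟩
      have hk' : 0 < k' := by omega
      have hPk : P ((k' + 1 : ℕ) : ℚ) := by
        clear hk1 hk2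
        induction (k' + 1 : ℕ) with
        | zero => simpa using hP0
        | succ m ihm => push_cast; push_cast at ihm; exact hPadd _ _ ihm hP1
      obtain ⟨f, hf, hsum⟩ :=
        split P hPdiv hPsub hPhalf (k' + 1) (by omega) (a - ((k' + 1 : ℕ) : ℚ))
          (hPsub _ _ ha.1 hPk) (by linarith) (by push_cast at hk2 ⊢; linarith)
      set u : ℚ := 1 + f 0 with hu
      set v : ℚ := a - u with hv
      have hfs : ∑ i, f i = f 0 + ∑ i : Fin k', f i.succ := by
        rw [Fin.sum_univ_succ]
      have htail_pos : 0 < ∑ i : Fin k', f i.succ := by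
        apply Finset.sum_pos
        · intro i _; exact (hf i.succ).2.1
        · have : Nonempty (Fin k') := Fin.pos_iff_nonempty.mp hk'
          exact Finset.univ_nonempty
      have htail_le : 2 * (∑ i : Fin k', f i.succ) ≤ (k' : ℚ) := by
        have h1 : ∑ i : Fin k', 2 * f i.succ ≤ ∑ i : Fin k', (1:ℚ) :=
          Finset.sum_le_sum (fun i _ => (hf i.succ).2.2)
        rw [Finset.mul_sum]
        simpa using h1
      have hveq : v = (k' : ℚ) + ∑ i : Fin k', f i.succ := by
        have : a = ((k' + 1 : ℕ) : ℚ) + ∑ i, f i := by linarith [hsum]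
        rw [hv, hu, this, hfs]; push_cast; ring
      have humem : u ∈ PMon P hP0 hPadd := by
        refine ⟨hPadd _ _ hP1 (hf 0).1, Or.inr ⟨1, one_pos, ?_, ?_⟩⟩
        · push_cast; simp only [hu]; linarith [(hf 0).2.1]
        · push_cast; simp only [hu]; linarith [(hf 0).2.2]
      have hvmem : v ∈ PMon P hP0 hPadd := by
        refine ⟨hPsub _ _ ha.1 humem.1, Or.inr ⟨k', hk', ?_, ?_⟩⟩
        · rw [hveq]; linarith
        · rw [hveq]; linarith
      have := hmin u v humem hvmem (by rw [hv]; ring)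
      rcases this with h0 | h0
      · have : (0:ℚ) < u := by rw [hu]; linarith [(hf 0).2.1]
        exact absurd h0 (by linarith)
      · have hk'1 : (1:ℚ) ≤ (k':ℚ) := by exact_mod_cast hk'
        have : (0:ℚ) < v := by rw [hveq]; linarith
        exact absurd h0 (by linarith)
  · rintro ⟨hPa, h1, h2⟩
    refine ⟨⟨hPa, Or.inr ⟨1, one_pos, by push_cast; linarith, by push_cast; linarith⟩⟩,
      by intro h; rw [h] at h1; norm_num at h1, ?_⟩
    intro u v hu hv heq
    by_contra hcon
    push_neg at hcon
    have hu1 : 1 < u := PMon_pos P hP0 hPadd hu hcon.1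
    have hv1 : 1 < v := PMon_pos P hP0 hPadd hv hcon.2
    linarith

include hP1 hPhalf hPsub hPdiv in
lemma lengths_char {x : ℚ} (hx : x ∈ PMon P hP0 hPadd) (hx0 : x ≠ 0) :
    lengthsOf (PMon P hP0 hPadd) x = {n : ℕ | 0 < n ∧ (n : ℚ) < x ∧ 2 * x ≤ 3 * n} := by
  ext n
  simp only [lengthsOf, Set.mem_setOf_eq]
  constructor
  · rintro ⟨f, hf, rfl⟩
    have hat : ∀ i, 1 < f i ∧ 2 * f i ≤ 3 := by
      intro i
      have := (atom_iff P hP0 hP1 hPhalf hPadd hPsub hPdiv).mp (hf i)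
      exact ⟨this.2.1, this.2.2⟩
    have hn : 0 < n := by
      rcases Nat.eq_zero_or_pos n with rfl | h
      · simp at hx0
      · exact h
    refine ⟨hn, ?_, ?_⟩
    · have : ∑ _i : Fin n, (1:ℚ) < ∑ i, f i := by
        apply Finset.sum_lt_sum_of_nonempty
        · have : Nonempty (Fin n) := Fin.pos_iff_nonempty.mp hn
          exact Finset.univ_nonempty
        · intro i _; exact (hat i).1
      simpa using this
    · have : ∑ i : Fin n, 2 * f i ≤ ∑ _i : Fin n, (3:ℚ) :=
        Finset.sum_le_sum (fun i _ => (hat i).2)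
      rw [Finset.mul_sum]
      simpa [mul_comm] using this
  · rintro ⟨hn, h1, h2⟩
    obtain ⟨f, hf, hsum⟩ := split P hPdiv hPsub hPhalf n hn (x - (n:ℚ))
      (hPsub _ _ hx.1 (by
        clear h1 h2 hx0 hx hn
        induction n with
        | zero => simpa using hP0
        | succ m ihm => push_cast; push_cast at ihm; exact hPadd _ _ ihm hP1))
      (by linarith) (by linarith)
    refine ⟨fun i => 1 + f i, ?_, ?_⟩
    · intro i
      show IsAtomOf (PMon P hP0 hPadd) (1 + f i)
      refine (atom_iff P hP0 hP1 hPhalf hPadd hPsub hPdiv).mpr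
        ⟨hPadd _ _ hP1 (hf i).1, by linarith [(hf i).2.1], by linarith [(hf i).2.2]⟩
    · rw [Finset.sum_add_distrib, hsum]
      simp
lemma lengths_zero : lengthsOf (PMon P hP0 hPadd) 0 = {0} := by
  ext n
  simp only [lengthsOf, Set.mem_setOf_eq, Set.mem_singleton_iff]
  constructor
  · rintro ⟨f, hf, hsum⟩
    by_contra hn
    have hn' : 0 < n := Nat.pos_of_ne_zero hn
    have : (0:ℚ) < ∑ i, f i := by
      apply Finset.sum_pos
      · intro i _
        have := hf i
        have h1 := PMon_pos P hP0 hPadd this.1 this.2.1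
        linarith
      · have : Nonempty (Fin n) := Fin.pos_iff_nonempty.mp hn'
        exact Finset.univ_nonempty
    rw [← hsum] at this
    norm_num at this
  · rintro rfl
    exact ⟨Fin.elim0, fun i => i.elim0, by simp⟩

end PM2


-- ## The two monoids

def trivadd : ∀ x y : ℚ, True → True → True := fun _ _ _ _ => trivial
def dyadd : ∀ x y : ℚ, DyadicQ x → DyadicQ y → DyadicQ (x + y) := fun _ _ => dy_add

def Mq : AddSubmonoid ℚ := PMon (fun _ => True) trivial trivadd
def Nd : AddSubmonoid ℚ := PMon DyadicQ dy_zero dyadd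

lemma mem_Mq {x : ℚ} :
    x ∈ Mq ↔ (x = 0 ∨ ∃ k : ℕ, 0 < k ∧ (k : ℚ) < x ∧ 2 * x ≤ 3 * k) := by
  constructor
  · exact fun h => h.2
  · exact fun h => ⟨trivial, h⟩

lemma mem_Nd {x : ℚ} :
    x ∈ Nd ↔ DyadicQ x ∧ (x = 0 ∨ ∃ k : ℕ, 0 < k ∧ (k : ℚ) < x ∧ 2 * x ≤ 3 * k) :=
  Iff.rfl

lemma Mq_lengths {x : ℚ} (hx : x ∈ Mq) (h0 : x ≠ 0) :
    lengthsOf Mq x = {n : ℕ | 0 < n ∧ (n : ℚ) < x ∧ 2 * x ≤ 3 * n} :=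
  lengths_char (fun _ => True) trivial trivial trivial trivadd
    (fun _ _ _ _ => trivial) (fun _ _ => trivial) hx h0

lemma Nd_lengths {x : ℚ} (hx : x ∈ Nd) (h0 : x ≠ 0) :
    lengthsOf Nd x = {n : ℕ | 0 < n ∧ (n : ℚ) < x ∧ 2 * x ≤ 3 * n} :=
  lengths_char DyadicQ dy_zero dy_one dy_half dyadd
    (fun _ _ => dy_sub) (fun _ => dy_div2) hx h0

lemma Mq_lengths0 : lengthsOf Mq 0 = {0} := lengths_zero _ trivial trivadd
lemma Nd_lengths0 : lengthsOf Nd 0 = {0} := lengths_zero _ dy_zero dyadd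

-- ## Basic properties

lemma puiseux_Mq : IsPuiseux Mq := fun _ hx => PMon_nonneg _ _ _ hx
lemma puiseux_Nd : IsPuiseux Nd := fun _ hx => PMon_nonneg _ _ _ hx

lemma atomic_Mq : AtomicM Mq := by
  intro x hx hx0
  obtain ⟨k, hk, hk1, hk2⟩ := (mem_Mq.mp hx).resolve_left hx0
  have : k ∈ lengthsOf Mq x := by
    rw [Mq_lengths hx hx0]; exact ⟨hk, hk1, hk2⟩
  exact ⟨k, this⟩

lemma atomic_Nd : AtomicM Nd := by
  intro x hx hx0
  obtain ⟨k, hk, hk1, hk2⟩ := (mem_Nd.mp hx).2.resolve_left hx0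
  have : k ∈ lengthsOf Nd x := by
    rw [Nd_lengths hx hx0]; exact ⟨hk, hk1, hk2⟩
  exact ⟨k, this⟩

-- ## Not finitely generated

lemma denom_bound (S : Finset ℚ) (x : ℚ) (hx : x ∈ AddSubmonoid.closure (S : Set ℚ)) :
    ∃ z : ℤ, x * ((∏ s ∈ S, s.den : ℕ) : ℚ) = z := by
  induction hx using AddSubmonoid.closure_induction with
  | mem s hs =>
    refine ⟨s.num * ((∏ t ∈ S.erase s, t.den : ℕ) : ℤ), ?_⟩
    rw [← Finset.mul_prod_erase _ _ hs]
    have hden : (s : ℚ) * (s.den : ℚ) = (s.num : ℚ) := by exact_mod_cast Rat.mul_den_eq_num s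
    push_cast
    linear_combination ((∏ t ∈ S.erase s, (t.den : ℚ))) * hden
  | zero => exact ⟨0, by simp⟩
  | add x y _ _ ihx ihy =>
    obtain ⟨zx, hzx⟩ := ihx
    obtain ⟨zy, hzy⟩ := ihy
    refine ⟨zx + zy, ?_⟩
    push_cast at hzx hzy ⊢
    linear_combination hzx + hzy

lemma not_fg_Mq : ¬ Mq.FG := by
  rintro ⟨S, hS⟩
  set D : ℕ := ∏ s ∈ S, s.den with hD
  have hD1 : 1 ≤ D := by
    apply Finset.one_le_prod'
    intro s _
    exact s.pos
  obtain ⟨p, hpge, hp⟩ := Nat.exists_infinite_primes (D + 1)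
  have hp2 : 2 ≤ p := hp.two_le
  have hp0 : (0:ℚ) < (p:ℚ) := by positivity
  have h2p : (2:ℚ) ≤ (p:ℚ) := by exact_mod_cast hp2
  have hxmem : (1 + 1/(p:ℚ)) ∈ Mq := by
    have hinv : 1/(p:ℚ) ≤ 1/2 := one_div_le_one_div_of_le (by norm_num) h2p
    refine mem_Mq.mpr (Or.inr ⟨1, one_pos, ?_, ?_⟩)
    · have : 0 < 1/(p:ℚ) := by positivity
      push_cast; linarith
    · push_cast; linarith
  have hxcl : (1 + 1/(p:ℚ)) ∈ AddSubmonoid.closure (S : Set ℚ) := by rw [hS]; exact hxmem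
  obtain ⟨z, hz⟩ := denom_bound S _ hxcl
  -- (1 + 1/p) * D = z  ⇒  (D:ℤ) = (z - D) * p
  rw [← hD] at hz
  have hz2 : (1 + 1/(p:ℚ)) * (D:ℚ) * (p:ℚ) = (z:ℚ) * (p:ℚ) := by rw [hz]
  have hz3 : (D:ℚ) * p + D = (z:ℚ) * p := by
    rw [← hz2]
    field_simp
  have hDQ : (D:ℚ) = ((z:ℚ) - (D:ℚ)) * (p:ℚ) := by linear_combination hz3
  have hDZ : (D:ℤ) = ((z : ℤ) - (D:ℤ)) * (p:ℤ) := by exact_mod_cast hDQ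
  have hdvd : (p:ℤ) ∣ (D:ℤ) := ⟨z - D, by linarith⟩
  have hle : (p:ℤ) ≤ (D:ℤ) := Int.le_of_dvd (by exact_mod_cast hD1) hdvd
  have : p ≤ D := by exact_mod_cast hle
  omega

lemma not_fg_Nd : ¬ Nd.FG := by
  rintro ⟨S, hS⟩
  set D : ℕ := ∏ s ∈ S, s.den with hD
  have hD1 : 1 ≤ D := by
    apply Finset.one_le_prod'
    intro s _
    exact s.pos
  have hpow : D < 2 ^ D := Nat.lt_two_pow_self
  have hp0 : (0:ℚ) < ((2:ℚ) ^ D) := by positivity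
  have h2p : (2:ℚ) ≤ (2:ℚ) ^ D := by
    calc (2:ℚ) = 2^1 := by norm_num
    _ ≤ 2^D := by apply pow_le_pow_right₀ <;> [norm_num; omega]
  have hxmem : (1 + 1/((2:ℚ)^D)) ∈ Nd := by
    have hinv : 1/((2:ℚ)^D) ≤ 1/2 := one_div_le_one_div_of_le (by norm_num) h2p
    refine mem_Nd.mpr ⟨⟨2^D + 1, D, by push_cast; field_simp⟩, Or.inr ⟨1, one_pos, ?_, ?_⟩⟩
    · have : 0 < 1/((2:ℚ)^D) := by positivity
      push_cast; linarith
    · push_cast; linarith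
  have hxcl : (1 + 1/((2:ℚ)^D)) ∈ AddSubmonoid.closure (S : Set ℚ) := by rw [hS]; exact hxmem
  obtain ⟨z, hz⟩ := denom_bound S _ hxcl
  rw [← hD] at hz
  have hz2 : (1 + 1/((2:ℚ)^D)) * (D:ℚ) * ((2:ℚ)^D) = (z:ℚ) * ((2:ℚ)^D) := by rw [hz]
  have hz3 : (D:ℚ) * ((2:ℚ)^D) + D = (z:ℚ) * ((2:ℚ)^D) := by
    rw [← hz2]
    field_simp
  have hDQ : (D:ℚ) = ((z:ℚ) - (D:ℚ)) * ((2:ℚ)^D) := by linear_combination hz3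
  have hDZ : (D:ℤ) = ((z : ℤ) - (D:ℤ)) * ((2:ℤ)^D) := by exact_mod_cast hDQ
  have hdvd : ((2:ℤ)^D) ∣ (D:ℤ) := ⟨z - D, by linarith⟩
  have hle : ((2:ℤ)^D) ≤ (D:ℤ) := Int.le_of_dvd (by exact_mod_cast hD1) hdvd
  have : 2^D ≤ D := by exact_mod_cast hle
  omega

-- ## Equality of systems of lengths

lemma halfint_eq {x y : ℚ} (hyx : y ≤ x)
    (hhalf : ∀ m : ℤ, ¬ (y ≤ (m:ℚ)/2 ∧ (m:ℚ)/2 < x)) :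
    {n : ℕ | 0 < n ∧ (n : ℚ) < y ∧ 2 * y ≤ 3 * n}
      = {n : ℕ | 0 < n ∧ (n : ℚ) < x ∧ 2 * x ≤ 3 * n} := by
  ext n
  simp only [Set.mem_setOf_eq]
  constructor
  · rintro ⟨h0, h1, h2⟩
    refine ⟨h0, by linarith, ?_⟩
    by_contra h
    push_neg at h
    exact hhalf (3*n) ⟨by push_cast; linarith, by push_cast; linarith⟩
  · rintro ⟨h0, h1, h2⟩
    refine ⟨h0, ?_, by linarith⟩
    by_contra h
    push_neg at h
    exact hhalf (2*n) ⟨by push_cast; linarith, by push_cast; linarith⟩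

lemma sys_eq : systemOfLengths Mq = systemOfLengths Nd := by
  ext L
  simp only [systemOfLengths, Set.mem_setOf_eq]
  constructor
  · rintro ⟨x, hx, rfl⟩
    by_cases h0 : x = 0
    · subst h0
      exact ⟨0, zero_mem _, by rw [Mq_lengths0, Nd_lengths0]⟩
    obtain ⟨k, hk, hk1, hk2⟩ := (mem_Mq.mp hx).resolve_left h0
    have hk1' : (1:ℚ) ≤ (k:ℚ) := by exact_mod_cast hk
    set t : ℤ := ⌊2*x⌋ with ht
    by_cases hxt : ((t:ℚ)) = 2*x
    · -- x is itself a half-integer, hence dyadic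
      refine ⟨x, mem_Nd.mpr ⟨⟨t, 1, by rw [pow_one]; linarith⟩, Or.inr ⟨k, hk, hk1, hk2⟩⟩, ?_⟩
      rw [Nd_lengths (mem_Nd.mpr ⟨⟨t, 1, by rw [pow_one]; linarith⟩, Or.inr ⟨k, hk, hk1, hk2⟩⟩) h0,
        Mq_lengths hx h0]
    · have htlt : (t:ℚ) < 2*x := lt_of_le_of_ne (Int.floor_le _) hxt
      set δ : ℚ := 2*x - t with hδ
      have hδ0 : 0 < δ := by rw [hδ]; linarith
      obtain ⟨j, hj⟩ := pow_unbounded_of_one_lt (δ⁻¹) (by norm_num : (1:ℚ) < 2)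
      have h2j : (1:ℚ) < δ * 2^j := by
        have := mul_lt_mul_of_pos_left hj hδ0
        rwa [mul_inv_cancel₀ (ne_of_gt hδ0)] at this
      set b : ℤ := ⌊x * 2^(j+1)⌋ with hb
      set y : ℚ := (b:ℚ)/2^(j+1) with hy
      have hq : (0:ℚ) < 2^(j+1) := by positivity
      have hyx : y ≤ x := by
        rw [hy, div_le_iff₀ hq]
        exact Int.floor_le _
      have hclose : x - y < δ/2 := by
        have hb2 : x * 2^(j+1) - 1 < (b:ℚ) := Int.sub_one_lt_floor _
        have hji : (1:ℚ)/2^j < δ := by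
          rw [div_lt_iff₀ (by positivity : (0:ℚ) < 2^j)]
          linarith
        have key : (x - y) * 2^(j+1) < 1 := by
          rw [hy]
          field_simp
          linarith
        have h1 : x - y < 1/2^(j+1) := by
          rw [lt_div_iff₀ hq]
          exact key
        have h2 : (1:ℚ)/2^(j+1) = (1/2^j)/2 := by
          rw [pow_succ]; ring
        linarith
      have hygt : (t:ℚ)/2 < y := by linarith
      have hhalf : ∀ m : ℤ, ¬ (y ≤ (m:ℚ)/2 ∧ (m:ℚ)/2 < x) := by
        rintro m ⟨hm1, hm2⟩
        have hmt : m ≤ t := Int.le_floor.mpr (by linarith)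
        have : (m:ℚ) ≤ (t:ℚ) := by exact_mod_cast hmt
        linarith
      have hky : (k:ℚ) < y := by
        by_contra h
        push_neg at h
        exact hhalf (2*k) ⟨by push_cast; linarith, by push_cast; linarith⟩
      have hyN : y ∈ Nd := mem_Nd.mpr
        ⟨⟨b, j+1, by rw [hy]; field_simp⟩, Or.inr ⟨k, hk, hky, by linarith⟩⟩
      have hy0 : y ≠ 0 := by
        intro h; rw [h] at hky; linarith
      refine ⟨y, hyN, ?_⟩
      rw [Nd_lengths hyN hy0, Mq_lengths hx h0]
      exact halfint_eq hyx hhalf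
  · rintro ⟨y, hy, rfl⟩
    have hyM : y ∈ Mq := mem_Mq.mpr (mem_Nd.mp hy).2
    refine ⟨y, hyM, ?_⟩
    by_cases h0 : y = 0
    · subst h0; rw [Mq_lengths0, Nd_lengths0]
    · rw [Mq_lengths hyM h0, Nd_lengths hy h0]

-- ## Non-isomorphism

lemma not_iso : ¬ Nonempty (Mq ≃+ Nd) := by
  rintro ⟨e⟩
  have hx₀mem : (3/2 : ℚ) ∈ Mq := mem_Mq.mpr (Or.inr ⟨1, one_pos, by norm_num, by norm_num⟩)
  set x₀ : Mq := ⟨3/2, hx₀mem⟩ with hx₀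
  set c : ℚ := (e x₀ : ℚ) with hc
  have hc0 : c ≠ 0 := by
    intro h
    have h1 : e x₀ = 0 := Subtype.ext h
    have h2 : e x₀ = e 0 := by rw [h1, map_zero]
    have h3 : x₀ = 0 := e.injective h2
    have : (3/2 : ℚ) = 0 := congrArg Subtype.val h3
    norm_num at this
  have hcnum : c.num ≠ 0 := Rat.num_ne_zero.mpr hc0
  obtain ⟨p, hpge, hp⟩ := Nat.exists_infinite_primes (c.num.natAbs + 3)
  have hp3 : 3 ≤ p := by omega
  have hpQ : (3:ℚ) ≤ (p:ℚ) := by exact_mod_cast hp3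
  have hp0 : (0:ℚ) < (p:ℚ) := by linarith
  have hzmem : ((p:ℚ) + 1)/p ∈ Mq := by
    refine mem_Mq.mpr (Or.inr ⟨1, one_pos, ?_, ?_⟩)
    · push_cast
      rw [lt_div_iff₀ hp0]
      linarith
    · push_cast
      rw [mul_one, mul_div_assoc', div_le_iff₀ hp0]
      linarith
  set z : Mq := ⟨((p:ℚ) + 1)/p, hzmem⟩ with hzdef
  have hsm : (3*p) • z = (2*(p+1)) • x₀ := by
    apply Subtype.ext
    push_cast
    simp only [nsmul_eq_mul, hzdef, hx₀]
    push_cast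
    field_simp
  have hsm2 : (3*p) • (e z) = (2*(p+1)) • (e x₀) := by
    rw [← map_nsmul, ← map_nsmul, hsm]
  have hQ : ((3*p : ℕ) : ℚ) * ((e z : ℚ)) = ((2*(p+1) : ℕ) : ℚ) * c := by
    have := congrArg (Subtype.val) hsm2
    push_cast [nsmul_eq_mul] at this ⊢
    linarith [this]
  obtain ⟨a, n, han⟩ := ((e z).2 : (e z : ℚ) ∈ Nd).1
  have hcden : c * (c.den : ℚ) = (c.num : ℚ) := by exact_mod_cast Rat.mul_den_eq_num c
  have hQ2 : (3*(p:ℚ)*a*c.den : ℚ) = 2*((p:ℚ)+1)*c.num*2^n := by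
    push_cast at hQ
    linear_combination (-3*(p:ℚ)*(c.den:ℚ)) * han + ((2:ℚ)^n * (c.den:ℚ)) * hQ
      + (2*((p:ℚ)+1)*2^n) * hcden
  have hZ : (3*(p:ℤ)*a*(c.den:ℤ)) = 2*((p:ℤ)+1)*c.num*2^n := by exact_mod_cast hQ2
  have hdvd : (p:ℤ) ∣ 2*((p:ℤ)+1)*c.num*2^n := ⟨3*a*(c.den:ℤ), by linarith⟩
  have hpZ : Prime (p:ℤ) := Int.prime_iff_natAbs_prime.mpr (by simpa)
  have hnot2 : ¬ (p:ℤ) ∣ 2 := by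
    intro h
    have := Int.le_of_dvd (by norm_num) h
    omega
  rcases hpZ.dvd_mul.mp hdvd with h1 | h1
  · rcases hpZ.dvd_mul.mp h1 with h2 | h2
    · rcases hpZ.dvd_mul.mp h2 with h3 | h3
      · exact hnot2 h3
      · have : (p:ℤ) ∣ 1 := (Int.dvd_add_right (dvd_refl (p:ℤ))).mp (by simpa using h3)
        have := Int.le_of_dvd (by norm_num) this
        omega
    · have hdabs : (p:ℤ) ∣ (c.num.natAbs : ℤ) := (Int.dvd_natAbs).mpr h2
      have habs0 : 0 < (c.num.natAbs : ℤ) := by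
        have : c.num.natAbs ≠ 0 := Int.natAbs_ne_zero.mpr hcnum
        omega
      have hple : (p:ℤ) ≤ (c.num.natAbs : ℤ) := Int.le_of_dvd habs0 hdabs
      have : p ≤ c.num.natAbs := by exact_mod_cast hple
      omega
  · exact hnot2 (hpZ.dvd_of_dvd_pow h1)

/-- There exist two non-isomorphic non-finitely generated atomic Puiseux monoids
with the same system of sets of lengths. -/
theorem stmt10 :
    ∃ M N : AddSubmonoid ℚ, IsPuiseux M ∧ IsPuiseux N ∧
      AtomicM M ∧ AtomicM N ∧ ¬ M.FG ∧ ¬ N.FG ∧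
      ¬ Nonempty (M ≃+ N) ∧
      systemOfLengths M = systemOfLengths N :=
  ⟨Mq, Nd, puiseux_Mq, puiseux_Nd, atomic_Mq, atomic_Nd, not_fg_Mq, not_fg_Nd, not_iso, sys_eq⟩
end
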